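/- arXiv:2503.02838 — 8 statements merged into one kernel-verified Lean document; each statement's English description precedes it below -/
import Mathlib

section
/- Let n ≥ 2 and let f : [0,∞) → (0,∞) be a smooth solution of the ODE f''/f + n (f')²/f² + n/f² = n+1 with initial conditions f'(0) = 0 and f(0) ∈ (√(n/(n+1)), 1]. Then log f is convex, i.e. f''(t) f(t) - f'(t)² ≥ 0 for all t ≥ 0. -/
/-!
The ODE has the first integral `E = (1 + f'² - f²) (f²)ⁿ`, and in terms of it
`(f'' f - f'²) (f²)ⁿ = (f²)ⁿ - (n + 1) E`. Since `s ↦ (1 - s) sⁿ` is strictly decreasing for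
`s ≥ n / (n + 1)` and `(1 - f²)(f²)ⁿ ≤ E = (1 - a²) a²ⁿ` with `a = f 0`, the value `f t` can
never lie in `[√(n / (n + 1)), a)`; by the intermediate value theorem it then never drops below `a`.
Hence `(f²)ⁿ ≥ a²ⁿ ≥ (n + 1)(1 - a²) a²ⁿ = (n + 1) E`, the middle step being `a² > n / (n + 1)`.
-/

open Set

lemma natCast_mul_pow_sub_one_mul {R : Type*} [Semiring R] (n : ℕ) (x : R) :
    (n : R) * x ^ (n - 1) * x = n * x ^ n := by
  rcases eq_or_ne n 0 with rfl | hn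
  · simp
  · rw [mul_assoc, pow_sub_one_mul hn]

lemma strictAntiOn_one_sub_mul_pow (n : ℕ) :
    StrictAntiOn (fun s : ℝ => (1 - s) * s ^ n) (Ici (n / (n + 1))) := by
  refine strictAntiOn_of_deriv_neg (convex_Ici _) (by fun_prop) fun s hs => ?_
  rw [interior_Ici, mem_Ioi, div_lt_iff₀ (by positivity)] at hs
  have hs0 : 0 < s := by nlinarith
  have hD : HasDerivAt (fun s : ℝ => (1 - s) * s ^ n)
      (-s ^ n + (1 - s) * (n * s ^ (n - 1))) s :=
    (((hasDerivAt_id' s).const_sub 1).fun_mul ((hasDerivAt_id' s).fun_pow n)).congr_deriv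
      (by ring)
  rw [hD.deriv]
  have key : (-s ^ n + (1 - s) * (n * s ^ (n - 1))) * s = s ^ n * (n - (n + 1) * s) := by
    linear_combination (1 - s) * natCast_mul_pow_sub_one_mul n s
  have hneg : s ^ n * (n - (n + 1) * s) < 0 := mul_neg_of_pos_of_neg (by positivity) (by linarith)
  exact neg_of_mul_neg_left (key ▸ hneg) hs0.le

lemma mul_eq_of_div_add_div_add_div {n x y z : ℝ} (hx : x ≠ 0)
    (h : z / x + n * y ^ 2 / x ^ 2 + n / x ^ 2 = n + 1) :
    z * x = (n + 1) * x ^ 2 - n * y ^ 2 - n := by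
  field_simp at h
  linear_combination h

noncomputable def odeEnergy (n : ℕ) (f : ℝ → ℝ) (t : ℝ) : ℝ :=
  (1 + deriv f t ^ 2 - f t ^ 2) * (f t ^ 2) ^ n

section Energy

variable {n : ℕ} {f : ℝ → ℝ}

lemma hasDerivAt_odeEnergy {t : ℝ} (hf : DifferentiableAt ℝ f t)
    (hf' : DifferentiableAt ℝ (deriv f) t) (hft : f t ≠ 0)
    (hode : deriv (deriv f) t * f t = (n + 1) * f t ^ 2 - n * deriv f t ^ 2 - n) :
    HasDerivAt (odeEnergy n f) 0 t := by
  have h := (((hf'.hasDerivAt.fun_pow 2).const_add 1).fun_sub (hf.hasDerivAt.fun_pow 2)).fun_mul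
    ((hf.hasDerivAt.fun_pow 2).fun_pow n)
  refine h.congr_deriv ?_
  refine (mul_left_inj' hft).mp ?_
  linear_combination (2 * deriv f t * (f t ^ 2) ^ n) * hode
    + 2 * deriv f t * (1 + deriv f t ^ 2 - f t ^ 2) * natCast_mul_pow_sub_one_mul n (f t ^ 2)

lemma odeEnergy_eq_odeEnergy_zero (hf : ContDiff ℝ 2 f) (hpos : ∀ t, 0 ≤ t → f t ≠ 0)
    (hode : ∀ t, 0 ≤ t →
      deriv (deriv f) t * f t = (n + 1) * f t ^ 2 - n * deriv f t ^ 2 - n)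
    {t : ℝ} (ht : 0 ≤ t) : odeEnergy n f t = odeEnergy n f 0 := by
  have hd := hf.differentiable two_ne_zero
  have hd' := hf.differentiable_deriv_two
  have hcont : Continuous (odeEnergy n f) := by
    unfold odeEnergy
    have := hd.continuous
    have := hd'.continuous
    fun_prop
  refine constant_of_has_deriv_right_zero hcont.continuousOn (fun s hs => ?_) t ⟨ht, le_rfl⟩
  exact (hasDerivAt_odeEnergy (hd s) (hd' s) (hpos s hs.1) (hode s hs.1)).hasDerivWithinAt

end Energy

lemma le_of_one_sub_sq_mul_pow_le {n : ℕ} {f : ℝ → ℝ} (hf : ContinuousOn f (Ici 0))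
    (h0 : √(n / (n + 1)) < f 0)
    (hle : ∀ t, 0 ≤ t → (1 - f t ^ 2) * (f t ^ 2) ^ n ≤ (1 - f 0 ^ 2) * (f 0 ^ 2) ^ n)
    {t : ℝ} (ht : 0 ≤ t) : f 0 ≤ f t := by
  set x₀ := √(n / (n + 1))
  have hx₀ : 0 ≤ x₀ := Real.sqrt_nonneg _
  have hx₀sq : x₀ ^ 2 = n / (n + 1) := Real.sq_sqrt (by positivity)
  have not_between : ∀ s, 0 ≤ s → x₀ ≤ f s → f s < f 0 → False := fun s hs hx₀s hs0 => by
    have hlt : f s ^ 2 < f 0 ^ 2 := by gcongr; linarith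
    have hmem : f s ^ 2 ∈ Ici ((n : ℝ) / (n + 1)) := by
      rw [← hx₀sq]
      exact pow_le_pow_left₀ hx₀ hx₀s 2
    exact (hle s hs).not_gt
      (strictAntiOn_one_sub_mul_pow n hmem (mem_Ici.mpr (hmem.out.trans hlt.le)) hlt)
  by_contra! hlt
  rcases le_or_gt x₀ (f t) with hx₀t | htx₀
  · exact not_between t ht hx₀t hlt
  · obtain ⟨s, hs, hfs⟩ := intermediate_value_Icc' ht (hf.mono Icc_subset_Ici_self)
      ⟨htx₀.le, h0.le⟩
    exact not_between s hs.1 hfs.ge (hfs ▸ h0)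

lemma mul_sub_sq_nonneg_of_energy_eq {n : ℕ} {a x y z : ℝ} (ha : 0 < a) (hax : a ≤ x)
    (han : n / (n + 1) < a ^ 2)
    (hode : z * x = (n + 1) * x ^ 2 - n * y ^ 2 - n)
    (henergy : (1 + y ^ 2 - x ^ 2) * (x ^ 2) ^ n = (1 - a ^ 2) * (a ^ 2) ^ n) :
    0 ≤ z * x - y ^ 2 := by
  have hxn : 0 < (x ^ 2) ^ n := pow_pos (pow_pos (ha.trans_le hax) 2) n
  have hcoef : 0 ≤ 1 - (n + 1) * (1 - a ^ 2) := by
    rw [div_lt_iff₀ (by positivity)] at han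
    linarith
  have hpow : (a ^ 2) ^ n ≤ (x ^ 2) ^ n := by gcongr
  refine nonneg_of_mul_nonneg_left ?_ hxn
  calc 0 ≤ (1 - (n + 1) * (1 - a ^ 2)) * (a ^ 2) ^ n := by positivity
    _ ≤ (x ^ 2) ^ n - (n + 1) * ((1 - a ^ 2) * (a ^ 2) ^ n) := by linarith
    _ = (z * x - y ^ 2) * (x ^ 2) ^ n := by
      linear_combination (n + 1) * henergy - (x ^ 2) ^ n * hode

theorem stmt_0_general (n : ℕ) (f : ℝ → ℝ)
    (hf : ContDiff ℝ ⊤ f)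
    (hpos : ∀ t, 0 ≤ t → 0 < f t)
    (hode : ∀ t, 0 ≤ t →
      deriv (deriv f) t / f t + n * (deriv f t) ^ 2 / (f t) ^ 2 + n / (f t) ^ 2 = n + 1)
    (hf'0 : deriv f 0 = 0)
    (hf0lo : Real.sqrt (n / (n + 1)) < f 0) :
    ∀ t, 0 ≤ t → 0 ≤ deriv (deriv f) t * f t - (deriv f t) ^ 2 := by
  have hf2 : ContDiff ℝ 2 f := hf.of_le le_top
  have hode' : ∀ t, 0 ≤ t →
      deriv (deriv f) t * f t = (n + 1) * f t ^ 2 - n * deriv f t ^ 2 - n := fun t ht =>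
    mul_eq_of_div_add_div_add_div (hpos t ht).ne' (hode t ht)
  have henergy : ∀ t, 0 ≤ t →
      (1 + deriv f t ^ 2 - f t ^ 2) * (f t ^ 2) ^ n = (1 - f 0 ^ 2) * (f 0 ^ 2) ^ n := by
    intro t ht
    simpa [odeEnergy, hf'0] using
      odeEnergy_eq_odeEnergy_zero hf2 (fun t ht => (hpos t ht).ne') hode' ht
  have hbarrier : ∀ t, 0 ≤ t → f 0 ≤ f t := fun t ht =>
    le_of_one_sub_sq_mul_pow_le hf2.continuous.continuousOn hf0lo (fun s hs =>
      (mul_le_mul_of_nonneg_right (by linarith [sq_nonneg (deriv f s)]) (by positivity)).trans_eq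
        (henergy s hs)) ht
  intro t ht
  exact mul_sub_sq_nonneg_of_energy_eq (hpos 0 le_rfl) (hbarrier t ht)
    ((Real.sqrt_lt' (hpos 0 le_rfl)).mp hf0lo) (hode' t ht) (henergy t ht)

theorem stmt_0 (n : ℕ) (hn : 2 ≤ n) (f : ℝ → ℝ)
    (hf : ContDiff ℝ ⊤ f)
    (hpos : ∀ t, 0 ≤ t → 0 < f t)
    (hode : ∀ t, 0 ≤ t →
      deriv (deriv f) t / f t + n * (deriv f t) ^ 2 / (f t) ^ 2 + n / (f t) ^ 2 = n + 1)
    (hf'0 : deriv f 0 = 0)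
    (hf0lo : Real.sqrt (n / (n + 1)) < f 0) (hf0hi : f 0 ≤ 1) :
    ∀ t, 0 ≤ t → 0 ≤ deriv (deriv f) t * f t - (deriv f t) ^ 2 :=
  stmt_0_general n f hf hpos hode hf'0 hf0lo
end

section
/- Let n ≥ 2 and let f : [0,∞) → (0,∞) be a smooth solution of f''/f + n (f')²/f² + n/f² = n+1 with f'(0) = 0 and f(0) ∈ (√(n/(n+1)), 1). Then f'(t)/f(t) < 1 for all t ≥ 0, and f'(t)/f(t) → 1 as t → ∞. -/
open scoped ContDiff

set_option maxHeartbeats 2000000 in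
theorem stmt_1 (n : ℕ) (hn : 2 ≤ n) (f : ℝ → ℝ)
    (hf : ContDiff ℝ (⊤ : ℕ∞) f)
    (hpos : ∀ t, 0 ≤ t → 0 < f t)
    (hode : ∀ t, 0 ≤ t →
      deriv (deriv f) t / f t + n * (deriv f t) ^ 2 / (f t) ^ 2 + n / (f t) ^ 2 = n + 1)
    (hf'0 : deriv f 0 = 0)
    (hf0lo : Real.sqrt (n / (n + 1)) < f 0) (hf0hi : f 0 < 1) :
    (∀ t, 0 ≤ t → deriv f t / f t < 1) ∧
    Filter.Tendsto (fun t => deriv f t / f t) Filter.atTop (nhds 1) := by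
  obtain ⟨k, rfl⟩ : ∃ k, n = k + 2 := ⟨n - 2, by omega⟩
  have h1 : ContDiff ℝ ∞ f := hf.of_le (by simp)
  have hdf : Differentiable ℝ f := h1.differentiable (by norm_num)
  have h2 := (contDiff_infty_iff_deriv.mp h1).2
  have hdf' : Differentiable ℝ (deriv f) := h2.differentiable (by norm_num)
  have hcf'' : Continuous (deriv (deriv f)) := ((contDiff_infty_iff_deriv.mp h2).2).continuous
  have f0pos : 0 < f 0 := hpos 0 le_rfl
  have hsq' : ((k:ℝ)+2) < ((k:ℝ)+3) * f 0^2 := by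
    have h := (Real.sqrt_lt' f0pos).mp hf0lo
    push_cast at h
    have h3 : (0:ℝ) < (k:ℝ)+2+1 := by positivity
    rw [div_lt_iff₀ h3] at h
    nlinarith [h]
  have hodep : ∀ t, 0 ≤ t → deriv (deriv f) t * f t + ((k:ℝ)+2) * (deriv f t)^2 + ((k:ℝ)+2)
      = (((k:ℝ)+2)+1) * (f t)^2 := by
    intro t ht
    have h := hode t ht
    have hne : f t ≠ 0 := (hpos t ht).ne'
    push_cast at h
    field_simp at h
    have h3 : (deriv (deriv f) t * f t + ((k:ℝ)+2) * (deriv f t)^2 + ((k:ℝ)+2)) * f t ^ 3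
        = ((((k:ℝ)+2)+1) * (f t)^2) * f t ^ 3 := by linear_combination (f t ^ 3) * h
    exact mul_right_cancel₀ (pow_ne_zero 3 hne) h3
  set E : ℝ := f 0 ^ (2*k+4) - f 0 ^ (2*k+6) with hEdef
  have hFd : ∀ t : ℝ, HasDerivAt
      (fun s => (deriv f s)^2 * f s ^ (2*k+4) - f s ^(2*k+6) + f s ^(2*k+4))
      (2 * deriv f t * f t ^(2*k+3) * (deriv (deriv f) t * f t + ((k:ℝ)+2) * (deriv f t)^2
        + ((k:ℝ)+2) - (((k:ℝ)+2)+1) * (f t)^2)) t := by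
    intro t
    have hd1 : HasDerivAt f (deriv f t) t := (hdf t).hasDerivAt
    have hd2 : HasDerivAt (deriv f) (deriv (deriv f) t) t := (hdf' t).hasDerivAt
    have h3 := hd2.pow 2
    have h4 := hd1.pow (2*k+4)
    have h5 := hd1.pow (2*k+6)
    have h6 := ((h3.mul h4).sub h5).add h4
    refine h6.congr_deriv ?_
    have e1 : 2*k+4-1 = 2*k+3 := by omega
    have e2 : 2*k+6-1 = 2*k+5 := by omega
    rw [e1, e2]
    simp only [Pi.pow_apply]
    push_cast
    ring
  have hdiffF : Differentiable ℝ
      (fun s => (deriv f s)^2 * f s ^ (2*k+4) - f s ^(2*k+6) + f s ^(2*k+4)) :=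
    fun t => (hFd t).differentiableAt
  have hFd0 : ∀ x ∈ interior (Set.Ici (0:ℝ)),
      deriv (fun s => (deriv f s)^2 * f s ^ (2*k+4) - f s ^(2*k+6) + f s ^(2*k+4)) x = 0 := by
    intro x hx
    rw [interior_Ici] at hx
    rw [(hFd x).deriv]
    have h := hodep x hx.le
    have hz : deriv (deriv f) x * f x + ((k:ℝ)+2) * (deriv f x)^2 + ((k:ℝ)+2)
        - (((k:ℝ)+2)+1) * (f x)^2 = 0 := by linarith
    rw [hz, mul_zero]
  have hcons : ∀ t, 0 ≤ t →
      (deriv f t)^2 * f t^(2*k+4) = f t^(2*k+6) - f t^(2*k+4) + E := by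
    intro t ht
    have hm := monotoneOn_of_deriv_nonneg (convex_Ici 0)
      hdiffF.continuous.continuousOn hdiffF.differentiableOn
      (fun x hx => ge_of_eq (hFd0 x hx))
    have ha := antitoneOn_of_deriv_nonpos (convex_Ici 0)
      hdiffF.continuous.continuousOn hdiffF.differentiableOn
      (fun x hx => le_of_eq (hFd0 x hx))
    have e1 := hm Set.self_mem_Ici (Set.mem_Ici.mpr ht) ht
    have e2 := ha Set.self_mem_Ici (Set.mem_Ici.mpr ht) ht
    simp only [hf'0, hEdef] at e1 e2 ⊢
    nlinarith [e1, e2]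
  have hball : ∀ u : ℝ, 0 < deriv (deriv f) u →
      ∃ ε > 0, ∀ s ∈ Set.Icc u (u+ε), 0 < deriv (deriv f) s := by
    intro u hu
    have hmem : {s | 0 < deriv (deriv f) s} ∈ nhds u :=
      (isOpen_lt continuous_const hcf'').mem_nhds hu
    rcases Metric.mem_nhds_iff.mp hmem with ⟨ε, hε, hb⟩
    refine ⟨ε/2, by positivity, fun s hs => hb ?_⟩
    rw [Metric.mem_ball, Real.dist_eq, abs_lt]
    obtain ⟨hs1, hs2⟩ := hs
    constructor <;> linarith
  have hright : ∀ u, 0 ≤ u → f 0 ≤ f u →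
      ∃ ε > 0, ∀ s ∈ Set.Icc u (u+ε), f 0 ≤ f s := by
    intro u hu hfu
    rcases lt_or_eq_of_le hfu with hlt | heq
    · have hmem : {s | f 0 < f s} ∈ nhds u :=
        (isOpen_lt continuous_const hdf.continuous).mem_nhds hlt
      rcases Metric.mem_nhds_iff.mp hmem with ⟨ε, hε, hb⟩
      refine ⟨ε/2, by positivity, fun s hs => le_of_lt (hb ?_)⟩
      rw [Metric.mem_ball, Real.dist_eq, abs_lt]
      obtain ⟨hs1, hs2⟩ := hs
      constructor <;> linarith
    · have hfu0 : f u = f 0 := heq.symm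
      have hf'u : deriv f u = 0 := by
        have hc := hcons u hu
        rw [hfu0] at hc
        have hz : (deriv f u)^2 * f 0^(2*k+4) = 0 := by rw [hc, hEdef]; ring
        have hz2 : (deriv f u)^2 = 0 := by
          rcases mul_eq_zero.mp hz with h | h
          · exact h
          · exact absurd h (pow_ne_zero _ f0pos.ne')
        exact pow_eq_zero_iff two_ne_zero |>.mp hz2
      have hf''u : 0 < deriv (deriv f) u := by
        have h := hodep u hu
        rw [hf'u, hfu0] at h
        nlinarith [h, f0pos, hsq']
      obtain ⟨ε, hε, hcont⟩ := hball u hf''u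
      refine ⟨ε, hε, fun s hs => ?_⟩
      have hmono' : StrictMonoOn (deriv f) (Set.Icc u (u+ε)) :=
        strictMonoOn_of_deriv_pos (convex_Icc _ _) hdf'.continuous.continuousOn
          (fun x hx => by rw [interior_Icc] at hx; exact hcont x (Set.Ioo_subset_Icc_self hx))
      have hfmono : MonotoneOn f (Set.Icc u (u+ε)) := by
        apply monotoneOn_of_deriv_nonneg (convex_Icc _ _) hdf.continuous.continuousOn
          hdf.differentiableOn
        intro x hx
        rw [interior_Icc] at hx
        have := hmono' (Set.left_mem_Icc.mpr (by linarith)) (Set.Ioo_subset_Icc_self hx) hx.1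
        rw [hf'u] at this
        exact this.le
      have := hfmono (Set.left_mem_Icc.mpr (by linarith)) hs hs.1
      rw [hfu0] at this
      exact this
  have hflb : ∀ t, 0 ≤ t → f 0 ≤ f t := by
    by_contra hcon
    push_neg at hcon
    obtain ⟨t, ht, hlt⟩ := hcon
    set A := Set.Icc 0 t ∩ {s | f 0 ≤ f s} with hA
    have hA0 : (0:ℝ) ∈ A := ⟨⟨le_rfl, ht⟩, Set.mem_setOf.mpr le_rfl⟩
    have hAclosed : IsClosed A :=
      isClosed_Icc.inter (isClosed_le continuous_const hdf.continuous)
    have hbdd : BddAbove A := ⟨t, fun s hs => hs.1.2⟩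
    have huA := hAclosed.csSup_mem ⟨0, hA0⟩ hbdd
    set u := sSup A with hu
    have hu0 : 0 ≤ u := le_csSup hbdd hA0
    have hut : u ≤ t := huA.1.2
    have hune : u ≠ t := by
      intro h
      have h2 := huA.2
      rw [h] at h2
      exact absurd h2 (not_le.mpr hlt)
    have hult : u < t := lt_of_le_of_ne hut hune
    obtain ⟨ε, hε, hεprop⟩ := hright u hu0 huA.2
    set s := min (u + ε) t with hs
    have husle : u ≤ s := le_min (by linarith) hut
    have hsA : s ∈ A := ⟨⟨le_trans hu0 husle, min_le_right _ _⟩,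
      hεprop s ⟨husle, min_le_left _ _⟩⟩
    have h1 : s ≤ u := le_csSup hbdd hsA
    have h2 : u < s := lt_min (by linarith) hult
    linarith
  have part1 : ∀ t, 0 ≤ t → deriv f t / f t < 1 := by
    intro t ht
    have hftpos := hpos t ht
    rw [div_lt_one hftpos]
    have hc := hcons t ht
    have hlb := hflb t ht
    have hElt : E < f t ^ (2*k+4) := by
      have e1 : f 0 ^(2*k+4) ≤ f t ^(2*k+4) := pow_le_pow_left₀ f0pos.le hlb _
      have e2 : 0 < f 0 ^(2*k+6) := pow_pos f0pos _
      rw [hEdef]; linarith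
    have hsq2 : (deriv f t)^2 < f t ^ 2 := by
      have hp : 0 < f t ^(2*k+4) := pow_pos hftpos _
      have e3 : (deriv f t)^2 * f t^(2*k+4) < f t^2 * f t^(2*k+4) := by
        rw [hc]
        have e4 : f t^2 * f t^(2*k+4) = f t^(2*k+6) := by ring
        rw [e4]; linarith
      exact lt_of_mul_lt_mul_right e3 hp.le
    by_contra hcon
    push_neg at hcon
    have := pow_le_pow_left₀ hftpos.le hcon 2
    linarith
  have hhmono : StrictMonoOn (fun y : ℝ => y^(2*k+6) - y^(2*k+4) + E) (Set.Ici (f 0)) := by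
    apply strictMonoOn_of_deriv_pos (convex_Ici _)
    · exact (((continuous_pow (2*k+6)).sub (continuous_pow (2*k+4))).add continuous_const).continuousOn
    · intro x hx
      rw [interior_Ici] at hx
      have hx0 : 0 < x := lt_trans f0pos hx
      have hD : HasDerivAt (fun y : ℝ => y^(2*k+6) - y^(2*k+4) + E)
          (↑(2*k+6) * x^(2*k+5) - ↑(2*k+4) * x^(2*k+3)) x := by
        have := ((hasDerivAt_pow (2*k+6) x).sub (hasDerivAt_pow (2*k+4) x)).add_const E
        have e1 : 2*k+4-1 = 2*k+3 := by omega
        have e2 : 2*k+6-1 = 2*k+5 := by omega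
        rw [e1, e2] at this
        exact this
      rw [hD.deriv]
      have hx' : f 0 < x := hx
      have hx2 : f 0^2 < x^2 := by nlinarith [f0pos, hx', mul_pos (sub_pos.mpr hx') (by linarith : (0:ℝ) < x + f 0)]
      have key : (0:ℝ) ≤ (2*(k:ℝ)+6) * (x^2 - f 0^2) :=
        mul_nonneg (by positivity) (by linarith)
      have e : (↑(2*k+6) : ℝ) * x^(2*k+5) - ↑(2*k+4)*x^(2*k+3)
          = x^(2*k+3) * ((2*(k:ℝ)+6) * x^2 - (2*(k:ℝ)+4)) := by push_cast; ring
      rw [e]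
      apply mul_pos (pow_pos hx0 _)
      nlinarith [hsq', key]
  have hhpos : ∀ y, f 0 < y → 0 < y^(2*k+6) - y^(2*k+4) + E := by
    intro y hy
    have h0 : f 0^(2*k+6) - f 0^(2*k+4) + E = 0 := by rw [hEdef]; ring
    have := hhmono Set.self_mem_Ici (Set.mem_Ici.mpr hy.le) hy
    simp only at this
    linarith
  have hf''0 : 0 < deriv (deriv f) 0 := by
    have h := hodep 0 le_rfl
    rw [hf'0] at h
    norm_num at h
    nlinarith [h, f0pos, hsq']
  obtain ⟨δ, hδpos, hδ⟩ := hball 0 hf''0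
  rw [zero_add] at hδ
  have hf'δ : ∀ s, 0 < s → s ≤ δ → 0 < deriv f s := by
    intro s hs hsδ
    have hmono' : StrictMonoOn (deriv f) (Set.Icc 0 δ) :=
      strictMonoOn_of_deriv_pos (convex_Icc _ _) hdf'.continuous.continuousOn
        (fun x hx => by rw [interior_Icc] at hx; exact hδ x (Set.Ioo_subset_Icc_self hx))
    have := hmono' (Set.left_mem_Icc.mpr hδpos.le) ⟨hs.le, hsδ⟩ hs
    rwa [hf'0] at this
  have hf'pos : ∀ t, 0 < t → 0 < deriv f t := by
    by_contra hcon
    push_neg at hcon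
    obtain ⟨t1, ht1, hle⟩ := hcon
    have hδt1 : δ < t1 := by
      by_contra hcon2
      push_neg at hcon2
      exact absurd (hf'δ t1 ht1 hcon2) (not_lt.mpr hle)
    set B := Set.Icc δ t1 ∩ {s | deriv f s ≤ 0} with hB
    have hBne : B.Nonempty := ⟨t1, ⟨hδt1.le, le_rfl⟩, hle⟩
    have hBclosed : IsClosed B := isClosed_Icc.inter (isClosed_le hdf'.continuous continuous_const)
    have hBbdd : BddBelow B := ⟨δ, fun s hs => hs.1.1⟩
    have huB := hBclosed.csInf_mem hBne hBbdd
    set u := sInf B with hu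
    have hδu : δ ≤ u := huB.1.1
    have hupos : 0 < u := lt_of_lt_of_le hδpos hδu
    have hfu' : deriv f u ≤ 0 := huB.2
    have hlt : ∀ s, 0 < s → s < u → 0 < deriv f s := by
      intro s hs hsu
      rcases le_or_gt s δ with h | h
      · exact hf'δ s hs h
      · by_contra hc
        push_neg at hc
        have hsB : s ∈ B := ⟨⟨h.le, by linarith [huB.1.2]⟩, hc⟩
        exact absurd (csInf_le hBbdd hsB) (not_le.mpr hsu)
    have hδltu : δ < u := by
      rcases eq_or_lt_of_le hδu with h | h
      · exfalso
        have := hf'δ u hupos (le_of_eq h.symm)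
        linarith
      · exact h
    have hge : 0 ≤ deriv f u := by
      have hne : (nhdsWithin u (Set.Ico δ u)).NeBot := by
        apply mem_closure_iff_nhdsWithin_neBot.mp
        rw [closure_Ico hδltu.ne]
        exact ⟨hδltu.le, le_rfl⟩
      have htend : Filter.Tendsto (deriv f) (nhdsWithin u (Set.Ico δ u)) (nhds (deriv f u)) :=
        (hdf'.continuous.continuousWithinAt)
      apply ge_of_tendsto htend
      filter_upwards [self_mem_nhdsWithin] with s hs
      exact (hlt s (lt_of_lt_of_le hδpos hs.1) hs.2).le
    have hfu'0 : deriv f u = 0 := le_antisymm hfu' hge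
    have hmonof : StrictMonoOn f (Set.Icc 0 u) :=
      strictMonoOn_of_deriv_pos (convex_Icc _ _) hdf.continuous.continuousOn
        (fun x hx => by rw [interior_Icc] at hx; exact hlt x hx.1 hx.2)
    have hfu : f 0 < f u := hmonof (Set.left_mem_Icc.mpr hupos.le)
      (Set.right_mem_Icc.mpr hupos.le) hupos
    have hp := hhpos (f u) hfu
    have hc := hcons u hupos.le
    rw [hfu'0] at hc
    norm_num at hc
    linarith
  have hmonof : StrictMonoOn f (Set.Ici 0) :=
    strictMonoOn_of_deriv_pos (convex_Ici 0) hdf.continuous.continuousOn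
      (fun x hx => by rw [interior_Ici] at hx; exact hf'pos x hx)
  have hunbdd : ∀ M : ℝ, ∃ t, 1 ≤ t ∧ M < f t := by
    intro M
    by_contra hcon
    push_neg at hcon
    have hf1 : f 0 < f 1 := hmonof Set.self_mem_Ici (Set.mem_Ici.mpr zero_le_one) one_pos
    have hM1 : 0 < M := lt_of_lt_of_le (hpos 1 zero_le_one) (hcon 1 le_rfl)
    have hc1 : 0 < f 1^(2*k+6) - f 1^(2*k+4) + E := hhpos (f 1) hf1
    obtain ⟨d, hdpos, hlow⟩ : ∃ d : ℝ, 0 < d ∧ ∀ t, 1 ≤ t → d ≤ deriv f t := by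
      have hd2pos : 0 < (f 1^(2*k+6) - f 1^(2*k+4) + E) / M^(2*k+4) :=
        div_pos hc1 (pow_pos hM1 _)
      refine ⟨Real.sqrt ((f 1^(2*k+6) - f 1^(2*k+4) + E) / M^(2*k+4)),
        Real.sqrt_pos.mpr hd2pos, ?_⟩
      intro t ht
      have ht0 : (0:ℝ) ≤ t := by linarith
      have hftc : f 1 ≤ f t := hmonof.monotoneOn (Set.mem_Ici.mpr zero_le_one)
        (Set.mem_Ici.mpr ht0) ht
      have hftM : f t ≤ M := hcon t ht
      have hhm : f 1^(2*k+6) - f 1^(2*k+4) + E ≤ f t^(2*k+6) - f t^(2*k+4) + E :=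
        hhmono.monotoneOn (Set.mem_Ici.mpr hf1.le) (Set.mem_Ici.mpr (hflb t ht0)) hftc
      have hpm : f t^(2*k+4) ≤ M^(2*k+4) := pow_le_pow_left₀ (hpos t ht0).le hftM _
      have hc2 := hcons t ht0
      have hf'2 : (f 1^(2*k+6) - f 1^(2*k+4) + E) / M^(2*k+4) ≤ (deriv f t)^2 := by
        rw [div_le_iff₀ (pow_pos hM1 _)]
        calc f 1^(2*k+6) - f 1^(2*k+4) + E ≤ f t^(2*k+6) - f t^(2*k+4) + E := hhm
        _ = (deriv f t)^2 * f t^(2*k+4) := hc2.symm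
        _ ≤ (deriv f t)^2 * M^(2*k+4) := mul_le_mul_of_nonneg_left hpm (sq_nonneg _)
      calc Real.sqrt ((f 1^(2*k+6) - f 1^(2*k+4) + E) / M^(2*k+4))
          ≤ Real.sqrt ((deriv f t)^2) := Real.sqrt_le_sqrt hf'2
      _ = |deriv f t| := Real.sqrt_sq_eq_abs _
      _ = deriv f t := abs_of_pos (hf'pos t (by linarith))
    have hGd : ∀ x : ℝ, HasDerivAt (fun t => f t - d * t) (deriv f x - d) x := by
      intro x
      have hl : HasDerivAt (fun t : ℝ => d * t) d x := by
        simpa using (hasDerivAt_id x).const_mul d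
      exact ((hdf x).hasDerivAt).sub hl
    have hGdiff : Differentiable ℝ (fun t => f t - d * t) := fun x => (hGd x).differentiableAt
    have hgrow : MonotoneOn (fun t => f t - d * t) (Set.Ici 1) := by
      apply monotoneOn_of_deriv_nonneg (convex_Ici 1) hGdiff.continuous.continuousOn
        hGdiff.differentiableOn
      intro x hx
      rw [interior_Ici] at hx
      rw [(hGd x).deriv]
      have := hlow x hx.le
      linarith
    obtain ⟨T, hT1, hdT⟩ : ∃ T : ℝ, 1 ≤ T ∧ d * (T - 1) = M - f 1 + 1 := by
      refine ⟨1 + (M - f 1 + 1)/d, ?_, ?_⟩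
      · have : 0 ≤ (M - f 1 + 1)/d := div_nonneg (by linarith [hcon 1 le_rfl]) hdpos.le
        linarith
      · field_simp; ring
    have hgT := hgrow Set.self_mem_Ici (Set.mem_Ici.mpr hT1) hT1
    simp only at hgT
    have hfT : f T ≤ M := hcon T hT1
    nlinarith [hgT, hdT]
  have htop : Filter.Tendsto f Filter.atTop Filter.atTop := by
    rw [Filter.tendsto_atTop]
    intro M
    obtain ⟨t0, ht0, hM⟩ := hunbdd M
    filter_upwards [Filter.eventually_ge_atTop t0] with t ht
    have : f t0 ≤ f t := hmonof.monotoneOn (Set.mem_Ici.mpr (by linarith))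
      (Set.mem_Ici.mpr (by linarith)) ht
    linarith
  have hq : Filter.Tendsto (fun t => 1 - 1/f t^2 + E/f t^(2*k+6)) Filter.atTop (nhds 1) := by
    have h2t : Filter.Tendsto (fun t => f t^2) Filter.atTop Filter.atTop := by
      have := (Filter.tendsto_pow_atTop (two_ne_zero)).comp htop
      exact this
    have h6t : Filter.Tendsto (fun t => f t^(2*k+6)) Filter.atTop Filter.atTop := by
      have := (Filter.tendsto_pow_atTop (by omega : 2*k+6 ≠ 0)).comp htop
      exact this
    have i2 : Filter.Tendsto (fun t => 1/f t^2) Filter.atTop (nhds 0) := by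
      simp only [one_div]; exact h2t.inv_tendsto_atTop
    have i6 : Filter.Tendsto (fun t => E/f t^(2*k+6)) Filter.atTop (nhds 0) := by
      have := (h6t.inv_tendsto_atTop).const_mul E
      simpa [div_eq_mul_inv] using this
    have := ((tendsto_const_nhds : Filter.Tendsto (fun _ : ℝ => (1:ℝ)) Filter.atTop (nhds 1)).sub i2).add i6
    simpa using this
  have hsq1 : Filter.Tendsto (fun t => Real.sqrt (1 - 1/f t^2 + E/f t^(2*k+6)))
      Filter.atTop (nhds 1) := by
    have := (Real.continuous_sqrt.tendsto 1).comp hq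
    rw [Real.sqrt_one] at this; exact this
  refine ⟨part1, hsq1.congr' ?_⟩
  filter_upwards [Filter.eventually_ge_atTop 1] with t ht
  have ht0 : (0:ℝ) ≤ t := by linarith
  have hftpos := hpos t ht0
  have hf't := hf'pos t (by linarith)
  have hc := hcons t ht0
  have hqt : 1 - 1/f t^2 + E/f t^(2*k+6) = (deriv f t / f t)^2 := by
    rw [div_pow]
    field_simp
    linear_combination (-(f t^2)) * hc
  rw [hqt, Real.sqrt_sq (by positivity)]
end

section
/- Let n ≥ 2 and let f be a solution of f''/f + n (f')²/f² + n/f² = n+1 with f'(0) = 0 and f(0) ∈ (√(n/(n+1)), 1), and let f₁(t) = cosh(t). Then f(t) < f₁(t) and f'(t)/f(t) < f₁'(t)/f₁(t) = tanh(t) for all t > 0. -/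
theorem stmt_2 (n : ℕ) (hn : 2 ≤ n) (f : ℝ → ℝ)
    (hf : ContDiff ℝ (⊤ : ℕ∞) f)
    (hpos : ∀ t, 0 ≤ t → 0 < f t)
    (hode : ∀ t, 0 ≤ t →
      deriv (deriv f) t / f t + n * (deriv f t) ^ 2 / (f t) ^ 2 + n / (f t) ^ 2 = n + 1)
    (hf'0 : deriv f 0 = 0)
    (hf0lo : Real.sqrt (n / (n + 1)) < f 0) (hf0hi : f 0 < 1) :
    ∀ t, 0 < t → f t < Real.cosh t ∧ deriv f t / f t < Real.tanh t := by
  have hfi : ContDiff ℝ ((⊤:ℕ∞) : WithTop ℕ∞) f := hf.of_le (by simp)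
  have hd1 : Differentiable ℝ f := hfi.differentiable (by simp)
  have hfd : ContDiff ℝ ((⊤:ℕ∞) : WithTop ℕ∞) (deriv f) := (contDiff_infty_iff_deriv.mp hfi).2
  have hd2 : Differentiable ℝ (deriv f) := hfd.differentiable (by simp)
  have hn' : (2:ℝ) ≤ (n:ℝ) := by exact_mod_cast hn
  -- cleared ODE
  have hode' : ∀ t, 0 ≤ t →
      deriv (deriv f) t * f t + n * (deriv f t)^2 + n = (n+1) * (f t)^2 := by
    intro t ht
    have hft := (hpos t ht).ne'
    have h := hode t ht
    field_simp at h
    have goalmul : (deriv (deriv f) t * f t + n*(deriv f t)^2 + n) * (f t)^3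
        = ((n+1)*(f t)^2) * (f t)^3 := by linear_combination (f t)^3 * h
    exact mul_right_cancel₀ (pow_ne_zero 3 hft) goalmul
  -- conserved quantity F
  set F : ℝ → ℝ := fun t => (f t)^(2*n) * ((deriv f t)^2 + 1 - (f t)^2) with hFdef
  have hFderiv : ∀ t : ℝ, HasDerivAt F
      (((2*n:ℕ):ℝ) * (f t)^(2*n-1) * deriv f t * ((deriv f t)^2 + 1 - (f t)^2)
        + (f t)^(2*n) * (2 * deriv f t * deriv (deriv f) t - 2 * f t * deriv f t)) t := by
    intro t
    have h1 : HasDerivAt f (deriv f t) t := (hd1 t).hasDerivAt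
    have h2 : HasDerivAt (deriv f) (deriv (deriv f) t) t := (hd2 t).hasDerivAt
    have hp : HasDerivAt (fun t => (f t)^(2*n))
        (((2*n:ℕ):ℝ) * (f t)^(2*n-1) * deriv f t) t := h1.pow (2*n)
    have hq : HasDerivAt (fun t => (deriv f t)^2 + 1 - (f t)^2)
        (2 * deriv f t * deriv (deriv f) t - 2 * f t * deriv f t) t := by
      have := ((h2.pow 2).add_const 1).sub (h1.pow 2)
      exact this.congr_deriv (by norm_num)
    have := hp.mul hq
    exact this.congr_deriv (by ring)
  have hFzero : ∀ t, 0 ≤ t →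
      (((2*n:ℕ):ℝ) * (f t)^(2*n-1) * deriv f t * ((deriv f t)^2 + 1 - (f t)^2)
        + (f t)^(2*n) * (2 * deriv f t * deriv (deriv f) t - 2 * f t * deriv f t)) = 0 := by
    intro t ht
    have hk := hode' t ht
    have hpow : (f t)^(2*n) = (f t)^(2*n-1) * f t := by
      rw [← pow_succ]
      congr 1
      omega
    rw [hpow]
    push_cast
    linear_combination (2 * deriv f t * (f t)^(2*n-1)) * hk
  have hFcont : Continuous F := by
    exact (hd1.continuous.pow _).mul
      (((hd2.continuous.pow 2).add continuous_const).sub (hd1.continuous.pow 2))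
  have hFconst : ∀ t, 0 ≤ t → F t = F 0 := by
    intro t ht
    rcases eq_or_lt_of_le ht with h | h
    · rw [← h]
    have := constant_of_has_deriv_right_zero (f := F) (a := 0) (b := t)
      hFcont.continuousOn (fun x hx => by
        have hx0 : HasDerivAt F 0 x := hFzero x hx.1 ▸ hFderiv x
        exact hx0.hasDerivWithinAt)
    exact this t (Set.mem_Icc.mpr ⟨ht, le_rfl⟩)
  have hC : 0 < F 0 := by
    have hF0 : F 0 = (f 0)^(2*n) * (1 - (f 0)^2) := by
      simp [hFdef, hf'0]
    rw [hF0]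
    have h0 := hpos 0 le_rfl
    have : 0 < 1 - (f 0)^2 := by nlinarith
    exact mul_pos (pow_pos h0 _) this
  have hP : ∀ t, 0 ≤ t → 0 < (deriv f t)^2 + 1 - (f t)^2 := by
    intro t ht
    have h1 : (f t)^(2*n) * ((deriv f t)^2 + 1 - (f t)^2) = F 0 := hFconst t ht
    have h2 : (0:ℝ) < (f t)^(2*n) := pow_pos (hpos t ht) _
    nlinarith [hC, h1, h2]
  -- the function g
  have hg : ∀ t : ℝ, HasDerivAt (fun t => f t * Real.sinh t - deriv f t * Real.cosh t)
      ((f t - deriv (deriv f) t) * Real.cosh t) t := by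
    intro t
    have h1 : HasDerivAt f (deriv f t) t := (hd1 t).hasDerivAt
    have h2 : HasDerivAt (deriv f) (deriv (deriv f) t) t := (hd2 t).hasDerivAt
    have := (h1.mul (Real.hasDerivAt_sinh t)).sub (h2.mul (Real.hasDerivAt_cosh t))
    exact this.congr_deriv (by ring)
  have hgderivpos : ∀ t, 0 ≤ t → 0 < (f t - deriv (deriv f) t) * Real.cosh t := by
    intro t ht
    have hP' := hP t ht
    have hfp := hpos t ht
    have hk := hode' t ht
    have hnum : 0 < f t - deriv (deriv f) t := by nlinarith
    exact mul_pos hnum (Real.cosh_pos t)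
  have hgmono : StrictMonoOn (fun t => f t * Real.sinh t - deriv f t * Real.cosh t)
      (Set.Ici 0) := by
    apply strictMonoOn_of_deriv_pos (convex_Ici 0)
    · exact ((hd1.continuous.mul Real.continuous_sinh).sub
        (hd2.continuous.mul Real.continuous_cosh)).continuousOn
    · intro x hx
      rw [interior_Ici] at hx
      rw [(hg x).deriv]
      exact hgderivpos x hx.le
  have hg0 : (fun t => f t * Real.sinh t - deriv f t * Real.cosh t) 0 = 0 := by
    simp [hf'0]
  have hgpos : ∀ t, 0 < t → 0 < f t * Real.sinh t - deriv f t * Real.cosh t := by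
    intro t ht
    have := hgmono Set.self_mem_Ici (Set.mem_Ici.mpr ht.le) ht
    rw [hg0] at this
    exact this
  -- f / cosh strictly decreasing
  have hhd : ∀ t : ℝ, HasDerivAt (fun t => f t / Real.cosh t)
      ((deriv f t * Real.cosh t - f t * Real.sinh t) / (Real.cosh t)^2) t := by
    intro t
    have h1 : HasDerivAt f (deriv f t) t := (hd1 t).hasDerivAt
    exact h1.div (Real.hasDerivAt_cosh t) (Real.cosh_pos t).ne'
  have hanti : StrictAntiOn (fun t => f t / Real.cosh t) (Set.Ici 0) := by
    apply strictAntiOn_of_deriv_neg (convex_Ici 0)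
    · exact (hd1.continuous.div Real.continuous_cosh
        (fun x => (Real.cosh_pos x).ne')).continuousOn
    · intro x hx
      rw [interior_Ici] at hx
      rw [(hhd x).deriv]
      apply div_neg_of_neg_of_pos
      · linarith [hgpos x hx]
      · positivity
  intro t ht
  constructor
  · have := hanti Set.self_mem_Ici (Set.mem_Ici.mpr ht.le) ht
    simp only [Real.cosh_zero, div_one] at this
    have hlt : f t / Real.cosh t < 1 := lt_trans this hf0hi
    exact (div_lt_one (Real.cosh_pos t)).mp hlt
  · rw [Real.tanh_eq_sinh_div_cosh, div_lt_div_iff₀ (hpos t ht.le) (Real.cosh_pos t)]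
    linarith [hgpos t ht]
end

section
/- Let n ≥ 2 and let f be a solution of f''/f + n (f')²/f² + n/f² = n+1 with f'(0) = 0 and f(0) ∈ (√(n/(n+1)), 1). Then the function t ↦ f''(t)/f(t) satisfies f''(t)/f(t) ≤ 1 for all t ≥ 0, is nondecreasing, and tends to 1 as t → ∞. -/
open Set Filter

set_option maxHeartbeats 2000000 in
theorem stmt_3 (n : ℕ) (hn : 2 ≤ n) (f : ℝ → ℝ)
    (hf : ContDiff ℝ (⊤ : ℕ∞) f)
    (hpos : ∀ t, 0 ≤ t → 0 < f t)
    (hode : ∀ t, 0 ≤ t →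
      deriv (deriv f) t / f t + n * (deriv f t) ^ 2 / (f t) ^ 2 + n / (f t) ^ 2 = n + 1)
    (hf'0 : deriv f 0 = 0)
    (hf0lo : Real.sqrt (n / (n + 1)) < f 0) (hf0hi : f 0 < 1) :
    (∀ t, 0 ≤ t → deriv (deriv f) t / f t ≤ 1) ∧
    MonotoneOn (fun t => deriv (deriv f) t / f t) (Set.Ici 0) ∧
    Filter.Tendsto (fun t => deriv (deriv f) t / f t) Filter.atTop (nhds 1) := by
  have hdf : Differentiable ℝ f := hf.differentiable (by simp)
  have hfi : ContDiff ℝ (↑(⊤:ℕ∞)) f := hf.of_le (mod_cast le_top)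
  have hcd' : ContDiff ℝ (↑(⊤:ℕ∞)) (deriv f) := (contDiff_infty_iff_deriv.mp hfi).2
  have hdf' : Differentiable ℝ (deriv f) := hcd'.differentiable (by simp)
  have hf0pos : 0 < f 0 := hpos 0 le_rfl
  have hnR : (2:ℝ) ≤ (n:ℝ) := by exact_mod_cast hn
  have hf0sq : (n:ℝ) / ((n:ℝ)+1) < (f 0)^2 := by
    have := (Real.sqrt_lt' hf0pos).mp (by exact_mod_cast hf0lo)
    convert this using 2 <;> push_cast <;> ring
  have hkey : (n:ℝ) < ((n:ℝ)+1) * (f 0)^2 := by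
    rw [div_lt_iff₀ (by positivity)] at hf0sq; linarith
  obtain ⟨c0, hc0⟩ : ∃ c : ℝ, c = (1 - (f 0)^2) * (f 0)^(2*n) := ⟨_, rfl⟩
  have hc0pos : 0 < c0 := by
    have h1 : (0:ℝ) < 1 - (f 0)^2 := by nlinarith
    rw [hc0]; exact mul_pos h1 (pow_pos hf0pos _)
  -- ODE in polynomial form
  have hodem : ∀ t, 0 ≤ t → deriv (deriv f) t * f t
      = ((n:ℝ)+1) * (f t)^2 - (n:ℝ) * (deriv f t)^2 - (n:ℝ) := by
    intro t ht
    have hft : f t ≠ 0 := (hpos t ht).ne'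
    have h := hode t ht
    field_simp at h
    have h3 : (f t)^3 ≠ 0 := pow_ne_zero _ hft
    refine mul_left_cancel₀ h3 ?_
    linear_combination (f t)^3 * h
  -- conserved quantity
  have hg : ∀ t, 0 ≤ t → ((deriv f t)^2 + 1 - (f t)^2) * (f t)^(2*n) = c0 := by
    have hgd : ∀ t, 0 ≤ t →
        HasDerivAt (fun s => ((deriv f s)^2 + 1 - (f s)^2) * (f s)^(2*n)) 0 t := by
      intro t ht
      have h1 : HasDerivAt f (deriv f t) t := (hdf t).hasDerivAt
      have h2 : HasDerivAt (deriv f) (deriv (deriv f) t) t := (hdf' t).hasDerivAt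
      have hA := ((h2.pow 2).add_const 1).sub (h1.pow 2)
      have hBp := h1.pow (2*n)
      have hM : HasDerivAt (fun s => ((deriv f s)^2 + 1 - (f s)^2) * (f s)^(2*n))
          ((((2:ℕ):ℝ) * deriv f t ^ (2-1) * deriv (deriv f) t - ((2:ℕ):ℝ) * f t ^ (2-1) * deriv f t)
            * f t ^ (2*n) + (deriv f t ^ 2 + 1 - f t ^ 2) * (((2*n:ℕ):ℝ) * f t ^ (2*n-1) * deriv f t)) t :=
        hA.mul hBp
      convert hM using 1
      obtain ⟨m, hm⟩ : ∃ m, 2*n = m+1 := ⟨2*n-1, by omega⟩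
      have hode' := hodem t ht
      have hmn : (m:ℝ) = 2*(n:ℝ) - 1 := by
        have : (m:ℝ) + 1 = 2*(n:ℝ) := by exact_mod_cast congrArg (Nat.cast : ℕ → ℝ) hm.symm
        linarith
      rw [hm]
      simp only [Nat.add_sub_cancel]
      push_cast
      linear_combination (-2 * deriv f t * (f t)^m) * hode'
        - (((deriv f t)^2 + 1 - (f t)^2) * (f t)^m * deriv f t) * hmn
    intro t ht
    have hconst := constant_of_has_deriv_right_zero
      (f := fun s => ((deriv f s)^2 + 1 - (f s)^2) * (f s)^(2*n)) (a := 0) (b := t)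
      ((((hdf'.continuous.pow 2).add continuous_const).sub (hdf.continuous.pow 2)).mul
        (hdf.continuous.pow (2*n))).continuousOn
      (fun x hx => (hgd x hx.1).hasDerivWithinAt)
      t ⟨ht, le_rfl⟩
    rw [hf'0] at hconst
    rw [hconst, hc0]
    ring
  -- explicit second derivative
  have hBmul : ∀ t, 0 ≤ t →
      deriv (deriv f) t * (f t)^(2*n+1) = (f t)^(2*n+2) - (n:ℝ)*c0 := by
    intro t ht
    linear_combination (f t)^(2*n) * hodem t ht - (n:ℝ) * hg t ht
  have hB : ∀ t, 0 ≤ t →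
      deriv (deriv f) t / f t = 1 - (n:ℝ)*c0/(f t)^(2*n+2) := by
    intro t ht
    have hft : f t ≠ 0 := (hpos t ht).ne'
    field_simp
    linear_combination (f t) * hBmul t ht
  have hB' : ∀ t, 0 ≤ t →
      deriv (deriv f) t = f t - (n:ℝ)*c0/(f t)^(2*n+1) := by
    intro t ht
    have hft : f t ≠ 0 := (hpos t ht).ne'
    field_simp
    linear_combination hBmul t ht
  -- lower bound f t ≥ f 0
  have hflb : ∀ t, 0 ≤ t → f 0 ≤ f t := by
    intro t ht
    by_contra hlt
    push_neg at hlt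
    obtain ⟨a, ha⟩ : ∃ a : ℝ, a = Real.sqrt ((n:ℝ) / ((n:ℝ)+1)) := ⟨_, rfl⟩
    have hapos : 0 ≤ a := ha ▸ Real.sqrt_nonneg _
    have haf0 : a < f 0 := by
      rw [ha]
      convert hf0lo using 3 <;> push_cast <;> ring
    obtain ⟨x, hx⟩ : ∃ x : ℝ, x = (max (f t) a + f 0) / 2 := ⟨_, rfl⟩
    have hmaxlt : max (f t) a < f 0 := max_lt hlt haf0
    have hx1 : x < f 0 := by rw [hx]; linarith
    have hxa : a < x := by
      have := le_max_right (f t) a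
      rw [hx]; linarith [max_lt hlt haf0]
    have hxft : f t < x := by
      have := le_max_left (f t) a
      rw [hx]; linarith
    have hxpos : 0 < x := lt_of_le_of_lt hapos hxa
    have hx1' : x < 1 := lt_trans hx1 hf0hi
    have hasq : a^2 = (n:ℝ)/((n:ℝ)+1) := by
      rw [ha]; exact Real.sq_sqrt (by positivity)
    have hanti : StrictAntiOn (fun y : ℝ => y^(2*n) * (1 - y^2)) (Icc a 1) := by
      apply strictAntiOn_of_deriv_neg (convex_Icc a 1)
        (((continuous_pow (2*n)).mul (continuous_const.sub (continuous_pow 2))).continuousOn)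
      intro y hy
      rw [interior_Icc] at hy
      have hy0 : 0 < y := lt_of_le_of_lt hapos hy.1
      have hysq : (n:ℝ)/((n:ℝ)+1) < y^2 := by
        rw [← hasq]
        exact pow_lt_pow_left₀ hy.1 hapos (by norm_num)
      have hder := (hasDerivAt_pow (2*n) y).mul ((hasDerivAt_pow 2 y).const_sub 1)
      rw [show deriv ((fun a : ℝ => a^(2*n)) * ((fun _ => (1:ℝ)) - fun a => a^2)) y = _ from hder.deriv]
      obtain ⟨m, hm⟩ : ∃ m, 2*n = m+1 := ⟨2*n-1, by omega⟩
      have hmn : (m:ℝ) = 2*(n:ℝ) - 1 := by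
        have : (m:ℝ) + 1 = 2*(n:ℝ) := by exact_mod_cast congrArg (Nat.cast : ℕ → ℝ) hm.symm
        linarith
      rw [hm]
      simp only [Nat.add_sub_cancel]
      push_cast
      have hym : 0 < y^m := pow_pos hy0 m
      have hneg : (n:ℝ) - ((n:ℝ)+1)*y^2 < 0 := by
        rw [div_lt_iff₀ (by positivity)] at hysq; linarith
      have key : ((m:ℝ)+1) * y^m * (1 - y^2) + y^(m+1) * (-(2*y)) 
          = y^m * (2 * ((n:ℝ) - ((n:ℝ)+1)*y^2)) := by
        linear_combination (y^m * (1 - y^2)) * hmn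
      nlinarith [key, mul_neg_of_pos_of_neg hym hneg]
    have hphif0 : (fun y : ℝ => y^(2*n) * (1 - y^2)) (f 0) = c0 := by
      simp only [hc0]; ring
    have hphix : c0 < x^(2*n) * (1 - x^2) := by
      have hmem1 : x ∈ Icc a 1 := ⟨le_of_lt hxa, le_of_lt hx1'⟩
      have hmem2 : f 0 ∈ Icc a 1 := ⟨le_of_lt haf0, le_of_lt hf0hi⟩
      have := hanti hmem1 hmem2 hx1
      rw [hphif0] at this
      exact this
    have hsub : Icc (f t) (f 0) ⊆ f '' Icc 0 t :=
      intermediate_value_Icc' ht hdf.continuous.continuousOn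
    obtain ⟨s, hs, hfs⟩ := hsub ⟨le_of_lt hxft, le_of_lt hx1⟩
    have hA := hg s hs.1
    rw [hfs] at hA
    nlinarith [sq_nonneg (deriv f s), pow_pos hxpos (2*n),
      mul_nonneg (sq_nonneg (deriv f s)) (pow_pos hxpos (2*n)).le]
  -- positive lower bound on f''
  obtain ⟨ε, hε⟩ : ∃ e : ℝ, e = f 0 - (n:ℝ) * c0 / (f 0)^(2*n+1) := ⟨_, rfl⟩
  have hnclt : (n:ℝ)*c0 < (f 0)^(2*n+2) := by
    have h1 : (n:ℝ)*(1-(f 0)^2) < (f 0)^2 := by nlinarith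
    calc (n:ℝ)*c0 = ((n:ℝ)*(1-(f 0)^2)) * (f 0)^(2*n) := by rw [hc0]; ring
      _ < (f 0)^2 * (f 0)^(2*n) := mul_lt_mul_of_pos_right h1 (pow_pos hf0pos _)
      _ = (f 0)^(2*n+2) := by ring
  have hεpos : 0 < ε := by
    rw [hε, sub_pos, div_lt_iff₀ (pow_pos hf0pos _)]
    calc (n:ℝ)*c0 < (f 0)^(2*n+2) := hnclt
      _ = f 0 * (f 0)^(2*n+1) := by ring
  have hf''ge : ∀ t, 0 ≤ t → ε ≤ deriv (deriv f) t := by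
    intro t ht
    rw [hB' t ht]
    have hle : f 0 ≤ f t := hflb t ht
    have h2 : (n:ℝ)*c0/(f t)^(2*n+1) ≤ (n:ℝ)*c0/(f 0)^(2*n+1) := by
      apply div_le_div_of_nonneg_left (by positivity) (pow_pos hf0pos _)
      exact pow_le_pow_left₀ hf0pos.le hle _
    rw [hε]
    linarith
  -- f' lower bound
  have hf'lb : ∀ t, 0 ≤ t → ε * t ≤ deriv f t := by
    have hc1 : Continuous (fun t : ℝ => deriv f t - ε * t) :=
      hdf'.continuous.sub (continuous_const.mul continuous_id)
    have hd1 : Differentiable ℝ (fun t : ℝ => deriv f t - ε * t) :=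
      hdf'.sub (differentiable_id.const_mul ε)
    have hmono : MonotoneOn (fun t => deriv f t - ε * t) (Ici 0) := by
      apply monotoneOn_of_deriv_nonneg (convex_Ici 0)
        hc1.continuousOn hd1.differentiableOn
      intro x hx
      rw [interior_Ici] at hx
      have hlin : HasDerivAt (fun t : ℝ => ε * t) ε x := by
        simpa using (hasDerivAt_id x).const_mul ε
      rw [show deriv (fun t => deriv f t - ε * t) x = _ from ((hdf' x).hasDerivAt.sub hlin).deriv]
      have := hf''ge x hx.le
      linarith
    intro t ht
    have h0 := hmono Set.self_mem_Ici (Set.mem_Ici.mpr ht) ht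
    simp only [hf'0, mul_zero, sub_zero] at h0
    linarith
  have hf'nonneg : ∀ t, 0 < t → 0 ≤ deriv f t := by
    intro t ht
    have h1 := hf'lb t ht.le
    nlinarith
  have hfmono : MonotoneOn f (Ici 0) := by
    apply monotoneOn_of_deriv_nonneg (convex_Ici 0) hdf.continuous.continuousOn
      hdf.differentiableOn
    intro x hx
    rw [interior_Ici] at hx
    exact hf'nonneg x hx
  -- quadratic lower bound ⇒ f → ∞
  have hflq : ∀ t, 0 ≤ t → f 0 + ε/2 * t^2 ≤ f t := by
    have hc1 : Continuous (fun t : ℝ => f t - ε/2 * t^2) :=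
      hdf.continuous.sub (continuous_const.mul (continuous_pow 2))
    have hd1 : Differentiable ℝ (fun t : ℝ => f t - ε/2 * t^2) :=
      hdf.sub ((differentiable_pow 2).const_mul (ε/2))
    have hmono : MonotoneOn (fun t => f t - ε/2 * t^2) (Ici 0) := by
      apply monotoneOn_of_deriv_nonneg (convex_Ici 0)
        hc1.continuousOn hd1.differentiableOn
      intro x hx
      rw [interior_Ici] at hx
      have hder : deriv (fun t => f t - ε/2 * t^2) x
          = deriv f x - ε/2 * ((2:ℕ) * x^1) :=
        ((hdf x).hasDerivAt.sub ((hasDerivAt_pow 2 x).const_mul (ε/2))).deriv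
      rw [hder]
      have := hf'lb x hx.le
      push_cast
      nlinarith
    intro t ht
    have := hmono (by simp : (0:ℝ) ∈ Ici (0:ℝ)) (by simpa using ht) ht
    simp only at this
    nlinarith
  have hbound : Tendsto (fun t : ℝ => f 0 + ε/2 * t^2) atTop atTop := by
    apply tendsto_atTop_add_const_left
    exact (tendsto_pow_atTop (two_ne_zero)).const_mul_atTop (by positivity)
  have hftop : Tendsto f atTop atTop :=
    tendsto_atTop_mono' atTop
      (by filter_upwards [eventually_ge_atTop (0:ℝ)] with t ht using hflq t ht) hbound
  -- final results
  have htend : Tendsto (fun t => deriv (deriv f) t / f t) atTop (nhds 1) := by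
    have h2 : Tendsto (fun t => (n:ℝ)*c0/(f t)^(2*n+2)) atTop (nhds 0) :=
      Tendsto.div_atTop tendsto_const_nhds ((tendsto_pow_atTop (by omega)).comp hftop)
    have h1 : Tendsto (fun t => 1 - (n:ℝ)*c0/(f t)^(2*n+2)) atTop (nhds 1) := by
      simpa using tendsto_const_nhds.sub h2
    apply h1.congr'
    filter_upwards [eventually_ge_atTop (0:ℝ)] with t ht
    exact (hB t ht).symm
  refine ⟨?_, ?_, htend⟩
  · intro t ht
    rw [hB t ht]
    have : 0 < (n:ℝ)*c0/(f t)^(2*n+2) := by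
      have := hpos t ht
      have hn0 : (0:ℝ) < (n:ℝ) := by linarith
      positivity
    linarith
  · intro s hs t ht hst
    simp only
    rw [hB s hs, hB t ht]
    have h1 : (f s)^(2*n+2) ≤ (f t)^(2*n+2) :=
      pow_le_pow_left₀ (hpos s hs).le (hfmono hs ht hst) _
    have h2 : (n:ℝ)*c0/(f t)^(2*n+2) ≤ (n:ℝ)*c0/(f s)^(2*n+2) := by
      apply div_le_div_of_nonneg_left ?_ (pow_pos (hpos s hs) _) h1
      have hn0 : (0:ℝ) < (n:ℝ) := by linarith
      positivity
    linarith
end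

section
/- Let n ≥ 2 and let f be a solution of f''/f + n (f')²/f² + n/f² = n+1 with f'(0) = 0 and f(0) ∈ (√(n/(n+1)), 1). For every ε > 0 there exists C > 0 such that |f'(t)/f(t) − 1| ≤ C e^{−(1−ε)t} for all t ≥ 0. -/
open Set

set_option maxHeartbeats 1000000 in
theorem stmt_5 (n : ℕ) (hn : 2 ≤ n) (f : ℝ → ℝ)
    (hf : ContDiff ℝ (⊤ : ℕ∞) f)
    (hpos : ∀ t, 0 ≤ t → 0 < f t)
    (hode : ∀ t, 0 ≤ t →
      deriv (deriv f) t / f t + n * (deriv f t) ^ 2 / (f t) ^ 2 + n / (f t) ^ 2 = n + 1)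
    (hf'0 : deriv f 0 = 0)
    (hf0lo : Real.sqrt (n / (n + 1)) < f 0) (hf0hi : f 0 < 1) :
    ∀ ε > (0 : ℝ), ∃ C > (0 : ℝ), ∀ t, 0 ≤ t →
      |deriv f t / f t - 1| ≤ C * Real.exp (-(1 - ε) * t) := by
  obtain ⟨k, rfl⟩ : ∃ k, n = k + 2 := ⟨n - 2, by omega⟩
  have hfi : ContDiff ℝ ((⊤:ℕ∞):WithTop ℕ∞) f := hf.of_le (by simp)
  have hd1 : Differentiable ℝ f := hfi.differentiable (by simp)
  have hc2 := (contDiff_infty_iff_deriv.mp hfi).2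
  have hd2 : Differentiable ℝ (deriv f) := hc2.differentiable (by simp)
  have hcont1 : Continuous (deriv f) := hd2.continuous
  have hcont2 : Continuous (deriv (deriv f)) :=
    ((contDiff_infty_iff_deriv.mp hc2).2).continuous
  set N : ℝ := (k:ℝ) + 2 with hN
  have hcast : ((k+2 : ℕ) : ℝ) = N := by push_cast [hN]; ring
  -- rearranged ODE
  have hode' : ∀ t, 0 ≤ t → deriv (deriv f) t * f t
      = (N+1) * (f t)^2 - N * (deriv f t)^2 - N := by
    intro t ht
    have h0 := hode t ht
    rw [hcast] at h0
    have hne : f t ≠ 0 := (hpos t ht).ne'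
    field_simp at h0
    apply mul_right_cancel₀ (pow_ne_zero 3 hne)
    linear_combination (f t)^3 * h0
  -- conserved quantity
  set E : ℝ → ℝ := fun t => ((deriv f t)^2 + 1 - (f t)^2) * (f t)^(2*k+4) with hE
  have hEderiv : ∀ t, 0 ≤ t → HasDerivAt E 0 t := by
    intro t ht
    have h1 : HasDerivAt f (deriv f t) t := (hd1 t).hasDerivAt
    have h2 : HasDerivAt (deriv f) (deriv (deriv f) t) t := (hd2 t).hasDerivAt
    have hA : HasDerivAt (fun s => (deriv f s)^2 + 1 - (f s)^2)
        ((2:ℕ) * (deriv f t)^1 * deriv (deriv f) t - (2:ℕ) * (f t)^1 * deriv f t) t :=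
      ((h2.pow 2).add_const 1).sub (h1.pow 2)
    have hB : HasDerivAt (fun s => (f s)^(2*k+4))
        (((2*k+4 : ℕ)) * (f t)^(2*k+4-1) * deriv f t) t := h1.pow (2*k+4)
    have hstep := hA.mul hB
    have hval : ((2:ℕ) * (deriv f t)^1 * deriv (deriv f) t - (2:ℕ) * (f t)^1 * deriv f t)
          * (f t)^(2*k+4)
        + ((deriv f t)^2 + 1 - (f t)^2) * (((2*k+4 : ℕ)) * (f t)^(2*k+4-1) * deriv f t)
        = 0 := by
      have hode2 := hode' t ht
      have he : 2*k+4-1 = 2*k+3 := by omega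
      rw [he]
      set P : ℝ := (f t)^(2*k+3) with hP
      have hfp : (f t)^(2*k+4) = P * f t := by rw [hP, ← pow_succ]
      rw [hfp]
      push_cast
      have hNk : ((k:ℝ) + 2) = N := by rw [hN]
      linear_combination (2 * deriv f t * P) * hode2
    rw [← hval]
    exact hstep
  -- E is constant
  have hEconst : ∀ t, 0 ≤ t → E t = E 0 := by
    intro t ht
    rcases eq_or_lt_of_le ht with h | h
    · rw [← h]
    have hcont : ContinuousOn E (Icc 0 t) := by
      apply Continuous.continuousOn
      exact (((hcont1.pow 2).add continuous_const).sub (hd1.continuous.pow 2)).mul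
        (hd1.continuous.pow _)
    have := constant_of_has_deriv_right_zero hcont (fun x hx =>
      (hEderiv x hx.1).hasDerivWithinAt)
    exact this t (Set.mem_Icc.mpr ⟨ht, le_refl t⟩)
  set y0 : ℝ := (f 0)^2 with hy0
  set K : ℝ := (1 - y0) * y0^(k+2) with hKdef
  have hy0pos : 0 < y0 := pow_pos (hpos 0 le_rfl) 2
  have hy0lt1 : y0 < 1 := by
    have := hpos 0 le_rfl
    nlinarith [hf0hi]
  have hKpos : 0 < K := by
    have : (0:ℝ) < y0^(k+2) := pow_pos hy0pos _
    nlinarith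
  -- the key identity
  have hfcast : ∀ t : ℝ, (f t)^(2*k+4) = ((f t)^2)^(k+2) := by
    intro t; rw [← pow_mul]; norm_num; ring_nf
  have hkey : ∀ t, 0 ≤ t →
      ((deriv f t)^2 + 1 - (f t)^2) * ((f t)^2)^(k+2) = K := by
    intro t ht
    have h1 := hEconst t ht
    rw [hE] at h1
    simp only at h1
    rw [hfcast t, hfcast 0, hf'0] at h1
    rw [h1, hKdef, hy0]
    ring
  set F : ℝ → ℝ := fun y => y^(k+2) * (y - 1) + K with hF
  have hFt : ∀ t, 0 ≤ t →
      (deriv f t)^2 * ((f t)^2)^(k+2) = F ((f t)^2) := by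
    intro t ht
    have := hkey t ht
    rw [hF]
    simp only
    linear_combination this
  have hFt_nonneg : ∀ t, 0 ≤ t → 0 ≤ F ((f t)^2) := by
    intro t ht
    rw [← hFt t ht]
    positivity
  set a : ℝ := N / (N + 1) with ha
  have hNpos : (0:ℝ) < N := by rw [hN]; positivity
  have hapos : 0 < a := by rw [ha]; positivity
  have halt : a < y0 := by
    have h1 : Real.sqrt (N / (N+1)) < f 0 := by
      have := hf0lo; rw [show ((k+2:ℕ):ℝ) = N from hcast] at this; exact this
    have h2 : Real.sqrt a ^ 2 = a := Real.sq_sqrt hapos.le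
    calc a = Real.sqrt a ^ 2 := h2.symm
    _ < (f 0)^2 := by
        apply pow_lt_pow_left₀ h1 (Real.sqrt_nonneg _)
        norm_num
  have hFy0 : F y0 = 0 := by rw [hF, hKdef]; ring
  have hFderiv : ∀ y : ℝ, HasDerivAt F ((k+2) * y^(k+1) * (y-1) + y^(k+2)) y := by
    intro y
    have h1 : HasDerivAt (fun y : ℝ => y^(k+2)) ((k+2) * y^(k+1)) y := by
      simpa using hasDerivAt_pow (k+2) y
    have h2 : HasDerivAt (fun y : ℝ => y - 1) 1 y := (hasDerivAt_id y).sub_const 1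
    simpa [hF] using (h1.mul h2).add_const K
  have hFmono : StrictMonoOn F (Ici a) := by
    apply strictMonoOn_of_deriv_pos (convex_Ici a)
    · apply Continuous.continuousOn; rw [hF]; fun_prop
    · intro y hy
      rw [interior_Ici] at hy
      rw [(hFderiv y).deriv]
      have hya : a < y := hy
      have hypos : 0 < y := lt_trans hapos hya
      have hyk : 0 < y^(k+1) := pow_pos hypos _
      have h2 : y^(k+2) = y^(k+1) * y := by ring
      have h3 : ((k:ℝ)+2+1) * y - ((k:ℝ)+2) > 0 := by
        have : ((k:ℝ)+2) / ((k:ℝ)+2+1) < y := by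
          rw [ha, hN] at hya; convert hya using 2 <;> push_cast <;> ring
        have hd : (0:ℝ) < (k:ℝ)+2+1 := by positivity
        rw [div_lt_iff₀ hd] at this
        nlinarith
      have h4 : 0 < ((k:ℝ)+2) * (y-1) + y := by nlinarith [h3]
      calc (0:ℝ) < y^(k+1) * (((k:ℝ)+2) * (y-1) + y) := mul_pos hyk h4
      _ = (↑k+2) * y^(k+1) * (y-1) + y^(k+2) := by push_cast; ring
  -- claim (A): y stays above y0
  have hylb : ∀ t, 0 ≤ t → y0 ≤ (f t)^2 := by
    intro t ht
    by_contra hcon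
    push_neg at hcon
    set m : ℝ := (a + y0) / 2 with hm
    have ham : a < m := by rw [hm]; linarith
    have hmy0 : m < y0 := by rw [hm]; linarith
    have hFm : F m < 0 := by
      have := hFmono (le_of_lt ham) halt.le hmy0
      rw [hFy0] at this; exact this
    rcases le_or_gt m ((f t)^2) with hcase | hcase
    · -- f t ^ 2 in [m, y0) : F < 0 but F ≥ 0
      have h1 : F ((f t)^2) < 0 := by
        have := hFmono (le_trans ham.le hcase) halt.le hcon
        rw [hFy0] at this; exact this
      exact absurd (hFt_nonneg t ht) (not_le.mpr h1)
    · -- IVT: find s with f s ^ 2 = m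
      have hconty : ContinuousOn (fun s => (f s)^2) (Icc 0 t) :=
        (hd1.continuous.pow 2).continuousOn
      have hmem : m ∈ Icc ((f t)^2) ((f 0)^2) := ⟨hcase.le, by rw [← hy0]; exact hmy0.le⟩
      have := intermediate_value_Icc' ht hconty hmem
      obtain ⟨s, hs, hfs⟩ := this
      have hFm2 : 0 ≤ F m := by rw [← hfs]; exact hFt_nonneg s hs.1
      exact absurd hFm2 (not_le.mpr hFm)
  -- claim (B): deriv f nonnegative
  have hdnn : ∀ t, 0 ≤ t → 0 ≤ deriv f t := by
    intro t1 ht1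
    by_contra hcon
    push_neg at hcon
    have ht1ne : t1 ≠ 0 := by rintro rfl; rw [hf'0] at hcon; exact absurd hcon (by norm_num)
    set S : Set ℝ := Icc 0 t1 ∩ {u | 0 ≤ deriv f u} with hS
    have hSclosed : IsClosed S := isClosed_Icc.inter (isClosed_le continuous_const hcont1)
    have hSne : S.Nonempty := ⟨0, ⟨le_rfl, ht1⟩, by simp [hf'0]⟩
    have hSbdd : BddAbove S := BddAbove.mono (inter_subset_left) bddAbove_Icc
    set s : ℝ := sSup S with hs
    have hsS : s ∈ S := hSclosed.csSup_mem hSne hSbdd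
    have hs0 : 0 ≤ s := hsS.1.1
    have hst1 : s ≤ t1 := hsS.1.2
    have hsne : s ≠ t1 := by
      intro h
      have h2 : (0:ℝ) ≤ deriv f t1 := h ▸ hsS.2
      exact absurd h2 (not_le.mpr hcon)
    have hslt : s < t1 := lt_of_le_of_ne hst1 hsne
    have hneg : ∀ u, s < u → u ≤ t1 → deriv f u < 0 := by
      intro u hu1 hu2
      by_contra h
      push_neg at h
      have : u ∈ S := ⟨⟨le_trans hs0 hu1.le, hu2⟩, h⟩
      exact absurd (le_csSup hSbdd this) (not_le.mpr hu1)
    have hds0 : deriv f s = 0 := by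
      refine le_antisymm ?_ hsS.2
      have htend : Filter.Tendsto (deriv f) (nhdsWithin s (Ioi s)) (nhds (deriv f s)) :=
        (hcont1.continuousAt.continuousWithinAt).tendsto
      refine le_of_tendsto htend ?_
      filter_upwards [Ioc_mem_nhdsGT_of_mem (Set.left_mem_Ico.mpr hslt)] with u hu
      exact (hneg u hu.1 hu.2).le
    -- f s ^ 2 = y0
    have hFys : F ((f s)^2) = 0 := by
      rw [← hFt s hs0, hds0]; ring
    have hys : (f s)^2 = y0 := by
      by_contra hne
      have hlt : y0 < (f s)^2 := lt_of_le_of_ne (hylb s hs0) (Ne.symm hne)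
      have := hFmono halt.le (le_trans halt.le (hylb s hs0)) hlt
      rw [hFy0, hFys] at this
      exact absurd this (by norm_num)
    -- f strictly decreasing on [s, t1]
    have hanti : StrictAntiOn f (Icc s t1) := by
      apply strictAntiOn_of_deriv_neg (convex_Icc s t1) hd1.continuous.continuousOn
      intro u hu
      rw [interior_Icc] at hu
      exact hneg u hu.1 hu.2.le
    have hflt : f t1 < f s := hanti ⟨le_rfl, hslt.le⟩ ⟨hslt.le, le_rfl⟩ hslt
    have : (f t1)^2 < y0 := by
      rw [← hys]
      have h1 : 0 < f t1 := hpos t1 ht1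
      nlinarith
    exact absurd (hylb t1 ht1) (not_le.mpr this)
  -- f is monotone on [0, ∞)
  have hfmono : MonotoneOn f (Ici 0) := by
    apply monotoneOn_of_deriv_nonneg (convex_Ici 0) hd1.continuous.continuousOn
      (hd1.differentiableOn)
    intro u hu
    rw [interior_Ici] at hu
    exact hdnn u hu.le
  -- claim (C): escape from the equilibrium
  have hdd0 : 0 < deriv (deriv f) 0 := by
    have h1 := hode' 0 le_rfl
    rw [hf'0] at h1
    have h2 : 0 < (N+1) * y0 - N := by
      have hN1 : (0:ℝ) < N + 1 := by linarith
      rw [ha, div_lt_iff₀ hN1] at halt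
      linarith
    have h3 : deriv (deriv f) 0 * f 0 = (N+1) * y0 - N := by rw [h1, hy0]; ring
    by_contra hcc
    push_neg at hcc
    have h4 : deriv (deriv f) 0 * f 0 ≤ 0 :=
      mul_nonpos_of_nonpos_of_nonneg hcc (hpos 0 le_rfl).le
    linarith
  obtain ⟨t0, ht0pos, hft0⟩ : ∃ t0, 0 < t0 ∧ f 0 < f t0 := by
    have hev : ∀ᶠ u in nhds (0:ℝ), 0 < deriv (deriv f) u :=
      (hcont2.continuousAt (x := (0:ℝ))).eventually_mem (Ioi_mem_nhds hdd0)
    obtain ⟨δ, hδpos, hball⟩ := Metric.eventually_nhds_iff.mp hev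
    set t0 : ℝ := δ/2 with ht0
    have ht0p : 0 < t0 := by positivity
    have hddpos : ∀ u ∈ Icc 0 t0, 0 < deriv (deriv f) u := by
      intro u hu
      apply hball
      rw [Real.dist_eq, sub_zero, abs_of_nonneg hu.1]
      calc u ≤ δ/2 := hu.2
      _ < δ := by linarith
    have hdmono : StrictMonoOn (deriv f) (Icc 0 t0) := by
      apply strictMonoOn_of_deriv_pos (convex_Icc 0 t0) hcont1.continuousOn
      intro u hu
      rw [interior_Icc] at hu
      exact hddpos u ⟨hu.1.le, hu.2.le⟩
    have hdpos : ∀ u ∈ Ioo 0 t0, 0 < deriv f u := by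
      intro u hu
      have := hdmono ⟨le_rfl, ht0p.le⟩ ⟨hu.1.le, hu.2.le⟩ hu.1
      rw [hf'0] at this
      exact this
    have hfmono2 : StrictMonoOn f (Icc 0 t0) := by
      apply strictMonoOn_of_deriv_pos (convex_Icc 0 t0) hd1.continuous.continuousOn
      intro u hu
      rw [interior_Icc] at hu
      exact hdpos u hu
    exact ⟨t0, ht0p, hfmono2 ⟨le_rfl, ht0p.le⟩ ⟨ht0p.le, le_rfl⟩ ht0p⟩
  set y2 : ℝ := (f t0)^2 with hy2
  have hy2gt : y0 < y2 := by
    have h1 := hpos 0 le_rfl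
    rw [hy2, hy0]
    exact pow_lt_pow_left₀ hft0 h1.le (by norm_num)
  have hy2F : 0 < F y2 := by
    have := hFmono halt.le (le_trans halt.le (le_of_lt hy2gt)) hy2gt
    rw [hFy0] at this; exact this
  -- claim (D): y = f^2 goes to infinity
  have hunb : ∀ M, 0 < M → ∃ T, 0 ≤ T ∧ ∀ t, T ≤ t → M ≤ (f t)^2 := by
    intro M hM
    -- it suffices to find one T with M ≤ f T ^ 2
    suffices h : ∃ T, 0 ≤ T ∧ M ≤ (f T)^2 by
      obtain ⟨T, hT0, hTM⟩ := h
      refine ⟨T, hT0, fun t htT => ?_⟩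
      have h1 := hfmono (mem_Ici.mpr hT0) (mem_Ici.mpr (le_trans hT0 htT)) htT
      have h2 := hpos T hT0
      calc M ≤ (f T)^2 := hTM
      _ ≤ (f t)^2 := pow_le_pow_left₀ h2.le h1 2
    by_contra hcon
    push_neg at hcon
    -- then f t ^ 2 < M for all t ≥ 0, and derivative bounded below
    have hyM : ∀ t, 0 ≤ t → (f t)^2 < M := fun t ht => hcon t ht
    set c : ℝ := Real.sqrt (F y2 / M^(k+2)) with hc
    have hMpos : (0:ℝ) < M^(k+2) := pow_pos hM _
    have hcpos : 0 < c := Real.sqrt_pos.mpr (by positivity)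
    have hdc : ∀ t, t0 ≤ t → c ≤ deriv f t := by
      intro t ht
      have ht0' : (0:ℝ) ≤ t := le_trans ht0pos.le ht
      have hy2le : y2 ≤ (f t)^2 := by
        have := hfmono (mem_Ici.mpr ht0pos.le) (mem_Ici.mpr ht0') ht
        have h2 := hpos t0 ht0pos.le
        rw [hy2]; nlinarith
      have hFle : F y2 ≤ F ((f t)^2) := by
        rcases eq_or_lt_of_le hy2le with h | h
        · rw [h]
        · exact (hFmono (le_trans halt.le hy2gt.le)
            (le_trans halt.le (le_trans hy2gt.le hy2le)) h).le
      have hylt : ((f t)^2)^(k+2) ≤ M^(k+2) :=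
        pow_le_pow_left₀ (by positivity) (hyM t ht0').le _
      have hd2 : c^2 ≤ (deriv f t)^2 := by
        rw [hc, Real.sq_sqrt (by positivity)]
        rw [div_le_iff₀ hMpos]
        calc F y2 ≤ F ((f t)^2) := hFle
        _ = (deriv f t)^2 * ((f t)^2)^(k+2) := (hFt t ht0').symm
        _ ≤ (deriv f t)^2 * M^(k+2) := by
            apply mul_le_mul_of_nonneg_left hylt (by positivity)
      nlinarith [hdnn t ht0']
    -- linear growth of f, contradiction with boundedness
    have hgrow : ∀ t, t0 ≤ t → f t0 + c * (t - t0) ≤ f t := by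
      intro t ht
      have hmono : MonotoneOn (fun x => f x - c * x) (Ici t0) := by
        apply monotoneOn_of_deriv_nonneg (convex_Ici t0)
          ((hd1.continuous.sub (continuous_const.mul continuous_id')).continuousOn)
        · exact (hd1.sub ((differentiable_id.const_mul c))).differentiableOn
        · intro u hu
          rw [interior_Ici] at hu
          have hder : deriv (fun x => f x - c * x) u = deriv f u - c * 1 := by
            exact ((hd1 u).hasDerivAt.sub ((hasDerivAt_id u).const_mul c)).deriv
          show 0 ≤ deriv (fun x => f x - c * x) u
          rw [hder]
          rw [mul_one]
          have := hdc u (le_of_lt hu)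
          linarith
      have := hmono (mem_Ici.mpr le_rfl) (mem_Ici.mpr ht) ht
      simp only at this
      linarith
    set t1 : ℝ := t0 + (Real.sqrt M + 1) / c with ht1
    have ht1ge : t0 ≤ t1 := by
      rw [ht1]
      have : 0 ≤ (Real.sqrt M + 1) / c := by positivity
      linarith
    have h1 : Real.sqrt M < f t1 := by
      have := hgrow t1 ht1ge
      have h2 : c * (t1 - t0) = Real.sqrt M + 1 := by
        rw [ht1]; field_simp; ring
      have h3 := hpos t0 ht0pos.le
      nlinarith
    have h2 : M < (f t1)^2 := by
      have h4 : Real.sqrt M ^ 2 = M := Real.sq_sqrt hM.le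
      nlinarith [Real.sqrt_nonneg M]
    exact absurd (hyM t1 (le_trans ht0pos.le ht1ge)) (not_lt.mpr h2.le)
  -- g = f'/f is at most 1
  have hKley : ∀ t, 0 ≤ t → K ≤ ((f t)^2)^(k+2) := by
    intro t ht
    have h1 : y0^(k+2) ≤ ((f t)^2)^(k+2) := pow_le_pow_left₀ hy0pos.le (hylb t ht) _
    have h2 : K ≤ y0^(k+2) := by
      rw [hKdef]
      nlinarith [pow_pos hy0pos (k+2)]
    linarith
  have hg_le_one : ∀ t, 0 ≤ t → deriv f t ≤ f t := by
    intro t ht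
    have hfpos := hpos t ht
    have hyp : (0:ℝ) < ((f t)^2)^(k+2) := pow_pos (pow_pos hfpos 2) _
    have h0 := hFt t ht
    have h2 := hKley t ht
    have h1 : (deriv f t)^2 * ((f t)^2)^(k+2) ≤ (f t)^2 * ((f t)^2)^(k+2) := by
      rw [h0, hF]
      simp only
      have h3 : ((f t)^2)^(k+2) * ((f t)^2 - 1) + K - (f t)^2 * ((f t)^2)^(k+2)
          = K - ((f t)^2)^(k+2) := by ring
      linarith
    have h4 : (deriv f t)^2 ≤ (f t)^2 := le_of_mul_le_mul_right h1 hyp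
    nlinarith [hdnn t ht]
  -- lower bound on (f')^2
  have hd2lb : ∀ t, 0 ≤ t → (f t)^2 - 1 ≤ (deriv f t)^2 := by
    intro t ht
    have hfpos := hpos t ht
    have hyp : (0:ℝ) < ((f t)^2)^(k+2) := pow_pos (pow_pos hfpos 2) _
    have h0 := hFt t ht
    have h1 : ((f t)^2 - 1) * ((f t)^2)^(k+2) ≤ (deriv f t)^2 * ((f t)^2)^(k+2) := by
      rw [h0, hF]
      simp only
      have h3 : ((f t)^2)^(k+2) * ((f t)^2 - 1) + K - ((f t)^2 - 1)*((f t)^2)^(k+2) = K := by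
        ring
      linarith
    exact le_of_mul_le_mul_right h1 hyp
  -- the main estimate, for ε ≤ 1
  have key : ∀ ε : ℝ, 0 < ε → ε ≤ 1 → ∃ C > (0:ℝ), ∀ t, 0 ≤ t →
      |deriv f t / f t - 1| ≤ C * Real.exp (-(1 - ε) * t) := by
    intro ε hε hε1
    have hee : 0 < ε * (2 - ε) := by nlinarith
    have he1 : (0:ℝ) ≤ 1 - ε := by linarith
    obtain ⟨T, hT0, hTy⟩ := hunb (max (1/(ε*(2-ε))) 1) (by positivity)
    have hfT := hpos T hT0
    -- on [T,∞): g ≥ 1 - ε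
    have hglb : ∀ t, T ≤ t → (1 - ε) * f t ≤ deriv f t := by
      intro t ht
      have ht0 : (0:ℝ) ≤ t := le_trans hT0 ht
      have hY := hTy t ht
      have hY1 : 1/(ε*(2-ε)) ≤ (f t)^2 := le_trans (le_max_left _ _) hY
      have hd2 := hd2lb t ht0
      have hfpos := hpos t ht0
      have h2 : 1 ≤ (f t)^2 * (ε*(2-ε)) := (div_le_iff₀ hee).mp hY1
      have h1 : (1-ε)^2 * (f t)^2 ≤ (deriv f t)^2 := by nlinarith
      have h3 : ((1-ε) * f t)^2 ≤ (deriv f t)^2 := by rw [mul_pow]; exact h1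
      exact (pow_le_pow_iff_left₀ (mul_nonneg he1 hfpos.le) (hdnn t ht0) two_ne_zero).mp h3
    -- exponential lower bound for f on [T,∞)
    have hexp : ∀ t, T ≤ t → f T * Real.exp ((1-ε)*(t-T)) ≤ f t := by
      intro t ht
      have hmono : MonotoneOn (fun x => Real.log (f x) - (1-ε)*x) (Ici T) := by
        apply monotoneOn_of_deriv_nonneg (convex_Ici T)
        · apply ContinuousOn.sub
          · apply ContinuousOn.log hd1.continuous.continuousOn
            intro x hx
            exact (hpos x (le_trans hT0 hx)).ne'
          · fun_prop
        · intro x hx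
          rw [interior_Ici] at hx
          have hx0 : (0:ℝ) ≤ x := le_trans hT0 (le_of_lt hx)
          apply DifferentiableAt.differentiableWithinAt
          apply DifferentiableAt.sub
          · exact ((hd1 x).hasDerivAt.log (hpos x hx0).ne').differentiableAt
          · fun_prop
        · intro x hx
          rw [interior_Ici] at hx
          have hx0 : (0:ℝ) ≤ x := le_trans hT0 (le_of_lt hx)
          have hL : HasDerivAt (fun x => Real.log (f x) - (1-ε)*x)
              (deriv f x / f x - (1-ε)*1) x :=
            (((hd1 x).hasDerivAt.log (hpos x hx0).ne')).sub ((hasDerivAt_id x).const_mul (1-ε))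
          rw [hL.deriv, mul_one, sub_nonneg, le_div_iff₀ (hpos x hx0)]
          exact hglb x (le_of_lt hx)
      have h1 := hmono (mem_Ici.mpr le_rfl) (mem_Ici.mpr ht) ht
      simp only at h1
      have h2 : Real.log (f T) + (1-ε)*(t - T) ≤ Real.log (f t) := by linarith
      have hft := hpos t (le_trans hT0 ht)
      calc f T * Real.exp ((1-ε)*(t-T))
          = Real.exp (Real.log (f T) + (1-ε)*(t-T)) := by
            rw [Real.exp_add, Real.exp_log hfT]
      _ ≤ Real.exp (Real.log (f t)) := Real.exp_le_exp.mpr h2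
      _ = f t := Real.exp_log hft
    set C1 : ℝ := Real.exp (2*(1-ε)*T) / (f T)^2 with hC1
    set C2 : ℝ := Real.exp ((1-ε)*T) with hC2
    have hC1pos : 0 < C1 := div_pos (Real.exp_pos _) (pow_pos hfT 2)
    have hC2pos : 0 < C2 := Real.exp_pos _
    refine ⟨C1 + C2, by linarith, ?_⟩
    intro t ht
    have hft := hpos t ht
    have hgle := hg_le_one t ht
    have hgnn := hdnn t ht
    have hgd : deriv f t / f t ≤ 1 := (div_le_one hft).mpr hgle
    have hgabs : |deriv f t / f t - 1| = 1 - deriv f t / f t := by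
      rw [abs_of_nonpos (by linarith), neg_sub]
    rw [hgabs]
    rcases le_or_gt T t with hTt | hTt
    · -- for t ≥ T
      have hd2 := hd2lb t ht
      have h5 : 0 ≤ deriv f t / f t := div_nonneg hgnn hft.le
      have hf2 : (0:ℝ) < (f t)^2 := pow_pos hft 2
      have h1 : 1 - deriv f t / f t ≤ 1/(f t)^2 := by
        have hone : 1 - deriv f t / f t ≤ 1 - (deriv f t / f t)^2 := by nlinarith
        have h7 : ((f t)^2 - 1)/(f t)^2 ≤ (deriv f t)^2/(f t)^2 :=
          (div_le_div_iff_of_pos_right hf2).mpr hd2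
        have h8 : ((f t)^2 - 1)/(f t)^2 = 1 - 1/(f t)^2 := by field_simp
        have h9 : (deriv f t / f t)^2 = (deriv f t)^2/(f t)^2 := by rw [div_pow]
        rw [h9] at hone
        linarith
      have h8 := hexp t hTt
      have h9 : (f T)^2 * Real.exp (2*(1-ε)*(t-T)) ≤ (f t)^2 := by
        have h10 := pow_le_pow_left₀ (by positivity) h8 2
        calc (f T)^2 * Real.exp (2*(1-ε)*(t-T))
            = (f T * Real.exp ((1-ε)*(t-T)))^2 := by
              have hexp2 : Real.exp (2*(1-ε)*(t-T)) = (Real.exp ((1-ε)*(t-T)))^2 := by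
                rw [sq, ← Real.exp_add]; ring_nf
              rw [mul_pow, hexp2]
        _ ≤ (f t)^2 := h10
      have h10 : 1/(f t)^2 ≤ 1/((f T)^2 * Real.exp (2*(1-ε)*(t-T))) :=
        one_div_le_one_div_of_le (by positivity) h9
      have h11 : 1/((f T)^2 * Real.exp (2*(1-ε)*(t-T))) ≤ C1 * Real.exp (-(1-ε)*t) := by
        have h12 : Real.exp (-(2*(1-ε)*(t-T))) ≤ Real.exp (2*(1-ε)*T + (-(1-ε)*t)) := by
          apply Real.exp_le_exp.mpr
          linarith [mul_nonneg he1 ht]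
        calc 1/((f T)^2 * Real.exp (2*(1-ε)*(t-T)))
            = ((f T)^2)⁻¹ * Real.exp (-(2*(1-ε)*(t-T))) := by
              rw [one_div, mul_inv, Real.exp_neg]
        _ ≤ ((f T)^2)⁻¹ * Real.exp (2*(1-ε)*T + (-(1-ε)*t)) := by
            apply mul_le_mul_of_nonneg_left h12 (by positivity)
        _ = C1 * Real.exp (-(1-ε)*t) := by
            rw [hC1, Real.exp_add]; ring
      calc 1 - deriv f t / f t ≤ 1/(f t)^2 := h1
      _ ≤ C1 * Real.exp (-(1-ε)*t) := le_trans h10 h11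
      _ ≤ (C1 + C2) * Real.exp (-(1-ε)*t) := by
          apply mul_le_mul_of_nonneg_right (by linarith) (Real.exp_nonneg _)
    · -- for t < T
      have h5 : 0 ≤ deriv f t / f t := div_nonneg hgnn hft.le
      have h2 : 1 ≤ C2 * Real.exp (-(1-ε)*t) := by
        rw [hC2, ← Real.exp_add, show (1-ε)*T + -(1-ε)*t = (1-ε)*(T-t) by ring]
        exact Real.one_le_exp (mul_nonneg he1 (by linarith))
      calc 1 - deriv f t / f t ≤ 1 := by linarith
      _ ≤ C2 * Real.exp (-(1-ε)*t) := h2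
      _ ≤ (C1 + C2) * Real.exp (-(1-ε)*t) := by
          apply mul_le_mul_of_nonneg_right (by linarith) (Real.exp_nonneg _)
  -- conclude
  intro ε hε
  rcases le_or_gt ε 1 with h1 | h1
  · exact key ε hε h1
  · obtain ⟨C, hC, hbound⟩ := key 1 one_pos le_rfl
    refine ⟨C, hC, fun t ht => ?_⟩
    calc |deriv f t / f t - 1| ≤ C * Real.exp (-(1-1)*t) := hbound t ht
    _ ≤ C * Real.exp (-(1-ε)*t) := by
        apply mul_le_mul_of_nonneg_left _ hC.le
        apply Real.exp_le_exp.mpr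
        have hp : 0 ≤ (ε - 1) * t := mul_nonneg (by linarith) ht
        linarith
end

section
/- Let n ≥ 2 and let f be a solution of f''/f + n (f')²/f² + n/f² = n+1 with f'(0) = 0, f(0) ∈ (√(n/(n+1)), 1). Then f is strictly increasing on (0,∞) and f(t) → ∞ as t → ∞. -/
open Set Filter Topology

set_option maxHeartbeats 2000000 in
theorem stmt_6 (n : ℕ) (hn : 2 ≤ n) (f : ℝ → ℝ)
    (hf : ContDiff ℝ (⊤ : ℕ∞) f)
    (hpos : ∀ t, 0 ≤ t → 0 < f t)
    (hode : ∀ t, 0 ≤ t →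
      deriv (deriv f) t / f t + n * (deriv f t) ^ 2 / (f t) ^ 2 + n / (f t) ^ 2 = n + 1)
    (hf'0 : deriv f 0 = 0)
    (hf0lo : Real.sqrt (n / (n + 1)) < f 0) (hf0hi : f 0 < 1) :
    StrictMonoOn f (Set.Ioi 0) ∧ Filter.Tendsto f Filter.atTop Filter.atTop := by
  have hfi : ContDiff ℝ (⊤ : ℕ∞) f := hf.of_le (by simp)
  have hd1 : Differentiable ℝ f := hf.differentiable (by simp)
  have hf' : ContDiff ℝ (⊤ : ℕ∞) (deriv f) := (contDiff_infty_iff_deriv.mp hfi).2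
  have hd2 : Differentiable ℝ (deriv f) := hf'.differentiable (by simp)
  set N : ℝ := (n : ℝ) with hN
  have hN2 : (2:ℝ) ≤ N := by rw [hN]; exact_mod_cast hn
  have hc0 : 0 < f 0 := hpos 0 le_rfl
  -- key form of the ODE
  have key : ∀ t, 0 ≤ t →
      deriv (deriv f) t * f t = (N+1) * f t ^ 2 - N * (deriv f t)^2 - N := by
    intro t ht
    have h0 := hode t ht
    have hft : f t ≠ 0 := (hpos t ht).ne'
    field_simp at h0
    have h3 : f t ^ 3 ≠ 0 := pow_ne_zero _ hft
    apply mul_left_cancel₀ h3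
    linear_combination (f t ^ 3) * h0
  -- energy function
  set E : ℝ → ℝ := fun t => (deriv f t)^2 * f t ^ (2*n) + f t ^ (2*n) - f t ^ (2*n+2)
    with hEdef
  have hEt : ∀ t : ℝ, HasDerivAt E
      ((2 * deriv f t ^ 1 * deriv (deriv f) t) * f t ^ (2*n)
        + (deriv f t)^2 * ((2*n : ℕ) * f t ^ (2*n-1) * deriv f t)
        + ((2*n : ℕ) * f t ^ (2*n-1) * deriv f t)
        - ((2*n+2 : ℕ) * f t ^ (2*n+2-1) * deriv f t)) t := by
    intro t
    have h1 : HasDerivAt f (deriv f t) t := (hd1 t).hasDerivAt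
    have h2 : HasDerivAt (deriv f) (deriv (deriv f) t) t := (hd2 t).hasDerivAt
    exact (((h2.pow 2).mul (h1.pow (2*n))).add (h1.pow (2*n))).sub (h1.pow (2*n+2))
  have hzero : ∀ t : ℝ, 0 ≤ t →
      ((2 * deriv f t ^ 1 * deriv (deriv f) t) * f t ^ (2*n)
        + (deriv f t)^2 * ((2*n : ℕ) * f t ^ (2*n-1) * deriv f t)
        + ((2*n : ℕ) * f t ^ (2*n-1) * deriv f t)
        - ((2*n+2 : ℕ) * f t ^ (2*n+2-1) * deriv f t)) = 0 := by
    intro t ht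
    have hk := key t ht
    have hy : f t ^ (2*n) = f t ^ (2*n-1) * f t := by
      rw [← pow_succ]; congr 1; omega
    have hy2 : f t ^ (2*n+2-1) = f t ^ (2*n-1) * f t ^ 2 := by
      rw [← pow_add]; congr 1; omega
    have hcoe1 : ((2*n : ℕ) : ℝ) = 2*N := by rw [hN]; push_cast; ring
    have hcoe2 : ((2*n+2 : ℕ) : ℝ) = 2*N+2 := by rw [hN]; push_cast; ring
    rw [hy, hy2, hcoe1, hcoe2]
    set A := f t ^ (2*n-1) with hA
    linear_combination (2 * deriv f t * A) * hk
  have hEconst : ∀ t, 0 ≤ t → E t = E 0 := by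
    intro t ht
    rcases eq_or_lt_of_le ht with h | h
    · rw [← h]
    · have hcont : ContinuousOn E (Icc 0 t) :=
        (fun x => (hEt x).differentiableAt) |> Differentiable.continuous |>.continuousOn
      have hder : ∀ x ∈ Ico (0:ℝ) t, HasDerivWithinAt E 0 (Ici x) x := by
        intro x hx
        have := (hEt x).hasDerivWithinAt (s := Ici x)
        rwa [hzero x hx.1] at this
      exact constant_of_has_deriv_right_zero hcont hder t ⟨ht, le_rfl⟩
  set c : ℝ := f 0 ^ (2*n) - f 0 ^ (2*n+2) with hcdef
  have hc : ∀ t, 0 ≤ t →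
      (deriv f t)^2 * f t ^ (2*n) = c - (f t ^ (2*n) - f t ^ (2*n+2)) := by
    intro t ht
    have h := hEconst t ht
    simp only [hEdef, hf'0] at h
    rw [hcdef]; nlinarith [h]
  have hsq1 : f 0 ^ 2 < 1 := by nlinarith
  have hcpos : 0 < c := by
    have hp : f 0 ^ (2*n+2) = f 0 ^ (2*n) * f 0 ^ 2 := by rw [pow_add]
    have := pow_pos hc0 (2*n)
    rw [hcdef, hp]; nlinarith
  -- elementary inequality from the sqrt hypothesis
  have hkey0 : ∀ x : ℝ, Real.sqrt (N/(N+1)) < x → N < (N+1) * x^2 := by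
    intro x hx
    have hx0 : 0 < x := lt_of_le_of_lt (Real.sqrt_nonneg _) hx
    have h1 : N/(N+1) < x^2 := (Real.sqrt_lt' hx0).mp hx
    have h2 : (0:ℝ) < N + 1 := by linarith
    calc N = (N/(N+1)) * (N+1) := by field_simp
    _ < x^2 * (N+1) := by apply mul_lt_mul_of_pos_right h1 h2
    _ = (N+1) * x^2 := by ring
  have hf0lo' : Real.sqrt (N/(N+1)) < f 0 := by
    convert hf0lo using 3 <;> push_cast <;> ring
  -- h(x) = x^{2n} - x^{2n+2} is strictly decreasing on [f 0, ∞)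
  have hanti : StrictAntiOn (fun x : ℝ => x^(2*n) - x^(2*n+2)) (Set.Ici (f 0)) := by
    apply strictAntiOn_of_deriv_neg (convex_Ici _)
      (Continuous.continuousOn (by continuity))
    intro x hx
    rw [interior_Ici] at hx
    have hx0 : 0 < x := lt_trans hc0 hx
    have hdx : deriv (fun x : ℝ => x^(2*n) - x^(2*n+2)) x
        = (2*n : ℕ) * x^(2*n-1) - (2*n+2 : ℕ) * x^(2*n+2-1) :=
      ((hasDerivAt_pow (2*n) x).sub (hasDerivAt_pow (2*n+2) x)).deriv
    rw [hdx]
    have hXX : N < (N+1) * x^2 := hkey0 x (lt_trans hf0lo' hx)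
    have e2 : x^(2*n+2-1) = x^(2*n-1) * x^2 := by rw [← pow_add]; congr 1; omega
    have hxp : 0 < x^(2*n-1) := pow_pos hx0 _
    rw [e2]
    push_cast
    nlinarith [mul_pos hxp (sub_pos.mpr hXX)]
  -- f'' 0 > 0
  have hF''0 : 0 < deriv (deriv f) 0 := by
    have hk := key 0 le_rfl
    rw [hf'0] at hk
    have := hkey0 (f 0) hf0lo'
    nlinarith
  -- deriv f > 0 just to the right of 0
  have near0 : ∀ᶠ x in 𝓝[>] (0:ℝ), 0 < deriv f x := by
    have hslope : Tendsto (slope (deriv f) 0) (𝓝[≠] (0:ℝ)) (𝓝 (deriv (deriv f) 0)) :=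
      hasDerivAt_iff_tendsto_slope.mp (hd2 0).hasDerivAt
    have hev : ∀ᶠ x in 𝓝[≠] (0:ℝ), 0 < slope (deriv f) 0 x :=
      hslope.eventually (eventually_gt_nhds hF''0)
    have hle : 𝓝[>] (0:ℝ) ≤ 𝓝[≠] (0:ℝ) :=
      nhdsWithin_mono 0 (fun x hx => ne_of_gt hx)
    filter_upwards [hle hev, self_mem_nhdsWithin] with x hx hx'
    have hx0 : 0 < x := hx'
    rw [slope_def_field, hf'0] at hx
    have hq : 0 < deriv f x / x := by
      have he : (deriv f x - 0) / (x - 0) = deriv f x / x := by ring_nf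
      rw [he] at hx; exact hx
    have hm := mul_pos hq hx0
    rwa [div_mul_cancel₀ _ hx0.ne'] at hm
  obtain ⟨δ, hδmem, hδsub⟩ := mem_nhdsGT_iff_exists_Ioo_subset.mp near0
  have hδ : (0:ℝ) < δ := hδmem
  -- main positivity of the derivative
  have hf'pos : ∀ t, 0 < t → 0 < deriv f t := by
    by_contra hcon
    push_neg at hcon
    obtain ⟨t₀, ht₀, ht₀'⟩ := hcon
    have hδt₀ : δ ≤ t₀ := by
      by_contra hlt
      push_neg at hlt
      exact absurd (hδsub ⟨ht₀, hlt⟩) (not_lt.2 ht₀')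
    set B := {t : ℝ | δ ≤ t ∧ deriv f t ≤ 0} with hBdef
    have hBne : B.Nonempty := ⟨t₀, hδt₀, ht₀'⟩
    have hBc : IsClosed B :=
      (isClosed_le continuous_const continuous_id).inter
        (isClosed_le hf'.continuous continuous_const)
    have hBb : BddBelow B := ⟨δ, fun x hx => hx.1⟩
    set s := sInf B with hsdef
    have hsB : s ∈ B := hBc.csInf_mem hBne hBb
    have hs0 : 0 < s := lt_of_lt_of_le hδ hsB.1
    have hpos' : ∀ x ∈ Ioo (0:ℝ) s, 0 < deriv f x := by
      intro x hx
      rcases lt_or_ge x δ with h | h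
      · exact hδsub ⟨hx.1, h⟩
      · by_contra hle
        push_neg at hle
        exact absurd (csInf_le hBb (⟨h, hle⟩ : x ∈ B)) (not_le.2 hx.2)
    have hmono : StrictMonoOn f (Icc 0 s) :=
      strictMonoOn_of_deriv_pos (convex_Icc _ _) hd1.continuous.continuousOn
        (by rw [interior_Icc]; exact hpos')
    have hfs : f 0 < f s := hmono ⟨le_rfl, hs0.le⟩ ⟨hs0.le, le_rfl⟩ hs0
    have hge : 0 ≤ deriv f s := by
      have hc2 : Tendsto (deriv f) (𝓝[<] s) (𝓝 (deriv f s)) :=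
        (hf'.continuous.tendsto s).mono_left nhdsWithin_le_nhds
      refine ge_of_tendsto hc2 ?_
      filter_upwards [Ioo_mem_nhdsLT_of_mem (⟨hs0, le_rfl⟩ : s ∈ Ioc (0:ℝ) s)] with x hx
      exact (hpos' x hx).le
    have hzero' : deriv f s = 0 := le_antisymm hsB.2 hge
    have hEs := hc s hs0.le
    rw [hzero'] at hEs
    have hlt := hanti (Set.self_mem_Ici) (hfs.le : f s ∈ Ici (f 0)) hfs
    simp only at hlt
    rw [hcdef] at hEs
    nlinarith [hEs, hlt]
  -- strict monotonicity
  have hsm : StrictMonoOn f (Set.Ici 0) :=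
    strictMonoOn_of_deriv_pos (convex_Ici 0) hd1.continuous.continuousOn
      (by rw [interior_Ici]; exact fun x hx => hf'pos x hx)
  refine ⟨hsm.mono Set.Ioi_subset_Ici_self, ?_⟩
  -- tendsto atTop
  by_contra hT
  rw [tendsto_atTop_atTop] at hT
  push_neg at hT
  obtain ⟨b, hb⟩ := hT
  have hbnd : ∀ t, 0 ≤ t → f t < b := by
    intro t ht
    obtain ⟨a, hta, hab⟩ := hb t
    rcases eq_or_lt_of_le hta with h | h
    · rwa [h]
    · exact lt_of_le_of_lt ((hsm.monotoneOn) ht (le_trans ht hta) hta) hab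
  set M := max b 1 with hMdef
  have hM1 : (1:ℝ) ≤ M := le_max_right _ _
  have hM0 : (0:ℝ) < M := lt_of_lt_of_le one_pos hM1
  have hM : ∀ t, 0 ≤ t → f t ≤ M := fun t ht => le_trans (hbnd t ht).le (le_max_left _ _)
  have hf1 : f 0 < f 1 := hsm self_mem_Ici (by norm_num) one_pos
  set d : ℝ := c - (f 1 ^ (2*n) - f 1 ^ (2*n+2)) with hddef
  have hd : 0 < d := by
    have hlt := hanti Set.self_mem_Ici (hf1.le : f 1 ∈ Ici (f 0)) hf1
    simp only at hlt
    rw [hddef, hcdef]; linarith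
  set ε := Real.sqrt (d / M^(2*n)) with hεdef
  have hε : 0 < ε := Real.sqrt_pos.mpr (div_pos hd (pow_pos hM0 _))
  have hlow : ∀ t, 1 ≤ t → ε ≤ deriv f t := by
    intro t ht
    have ht0 : (0:ℝ) ≤ t := by linarith
    have h1t : f 1 ≤ f t := (hsm.monotoneOn) (by norm_num) ht0 ht
    have hEq := hc t ht0
    have hmono2 : f t ^ (2*n) - f t ^ (2*n+2) ≤ f 1 ^ (2*n) - f 1 ^ (2*n+2) := by
      rcases eq_or_lt_of_le h1t with h | h
      · rw [← h]
      · exact (hanti (hf1.le : f 1 ∈ Ici (f 0))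
          ((hf1.trans h).le : f t ∈ Ici (f 0)) h).le
    have hdle : d ≤ (deriv f t)^2 * f t ^ (2*n) := by rw [hddef]; linarith
    have hftM : f t ^ (2*n) ≤ M ^ (2*n) :=
      pow_le_pow_left₀ (hpos t ht0).le (hM t ht0) _
    have hsq : d / M^(2*n) ≤ (deriv f t)^2 := by
      rw [div_le_iff₀ (pow_pos hM0 _)]
      nlinarith [sq_nonneg (deriv f t), pow_pos (hpos t ht0) (2*n)]
    calc ε ≤ Real.sqrt ((deriv f t)^2) := Real.sqrt_le_sqrt hsq
    _ = |deriv f t| := by rw [Real.sqrt_sq_eq_abs]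
    _ = deriv f t := abs_of_pos (hf'pos t (by linarith))
  have hgrow : ∀ t, 1 ≤ t → f 1 + ε * (t - 1) ≤ f t := by
    intro t ht
    have hders : ∀ x : ℝ, HasDerivAt (fun t => f t - ε * t) (deriv f x - ε * 1) x :=
      fun x => (hd1 x).hasDerivAt.sub ((hasDerivAt_id x).const_mul ε)
    have hmg : MonotoneOn (fun t => f t - ε * t) (Ici 1) := by
      apply monotoneOn_of_deriv_nonneg (convex_Ici 1)
        (fun x _ => (hders x).continuousAt.continuousWithinAt)
      · exact fun x _ => (hders x).differentiableAt.differentiableWithinAt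
      · intro x hx
        rw [interior_Ici] at hx
        rw [(hders x).deriv]
        have := hlow x (le_of_lt hx)
        linarith
    have := hmg self_mem_Ici (ht : t ∈ Ici (1:ℝ)) ht
    simp only at this
    linarith
  set T := max 1 ((b - f 1)/ε + 2) with hTdef
  have hT1 : (1:ℝ) ≤ T := le_max_left _ _
  have h1 : f T < b := hbnd T (by linarith)
  have h2 : f 1 + ε * (T - 1) ≤ f T := hgrow T hT1
  have hTb : (b - f 1)/ε + 2 ≤ T := le_max_right _ _
  have h3 : b - f 1 + ε ≤ ε * (T - 1) := by
    have h4 : (b - f 1)/ε + 1 ≤ T - 1 := by linarith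
    calc b - f 1 + ε = ε * ((b - f 1)/ε + 1) := by field_simp
    _ ≤ ε * (T-1) := mul_le_mul_of_nonneg_left h4 hε.le
  linarith
end

section
/- Let n ≥ 2 and let f be a solution of f''/f + n (f')²/f² + n/f² = n+1 with f'(0) = 0 and f(0) ∈ (√(n/(n+1)), 1]. Then the 'transverse curvature' K_tr(t) := −f''(t)/f(t) satisfies −1 ≤ K_tr(t) ≤ −(n+1) + n/f(0)² < 0 for all t ≥ 0, and the 'disk curvature' K(t) := −2(n+1) − 2(n−1)K_tr(t) satisfies −2(n+1) ≤ K(t) ≤ −4. -/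
open Set
open scoped ContDiff

set_option maxHeartbeats 1000000 in
theorem stmt_18 (n : ℕ) (hn : 2 ≤ n) (f : ℝ → ℝ)
    (hf : ContDiff ℝ (⊤ : ℕ∞) f)
    (hpos : ∀ t, 0 ≤ t → 0 < f t)
    (hode : ∀ t, 0 ≤ t →
      deriv (deriv f) t / f t + n * (deriv f t) ^ 2 / (f t) ^ 2 + n / (f t) ^ 2 = n + 1)
    (hf'0 : deriv f 0 = 0)
    (hf0lo : Real.sqrt (n / (n + 1)) < f 0) (hf0hi : f 0 ≤ 1) :
    ∀ t, 0 ≤ t →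
      (-1 ≤ -(deriv (deriv f) t / f t) ∧
       -(deriv (deriv f) t / f t) ≤ -((n : ℝ) + 1) + n / (f 0) ^ 2 ∧
       -((n : ℝ) + 1) + n / (f 0) ^ 2 < 0) ∧
      (-(2 * ((n : ℝ) + 1)) ≤
          -(2 * ((n : ℝ) + 1)) - 2 * ((n : ℝ) - 1) * (-(deriv (deriv f) t / f t)) ∧
       -(2 * ((n : ℝ) + 1)) - 2 * ((n : ℝ) - 1) * (-(deriv (deriv f) t / f t)) ≤ -4) := by
  have hc0 : 0 < f 0 := hpos 0 le_rfl
  have hcsq : (n : ℝ) / (n + 1) < (f 0) ^ 2 := (Real.sqrt_lt' hc0).mp hf0lo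
  have hfi : ContDiff ℝ ∞ f := hf.of_le (by simp)
  have hd1 : Differentiable ℝ f := hfi.differentiable (by simp)
  have hf1 : ContDiff ℝ ∞ (deriv f) := (contDiff_infty_iff_deriv.mp hfi).2
  have hd2 : Differentiable ℝ (deriv f) := hf1.differentiable (by simp)
  have hcont2 : Continuous (deriv (deriv f)) :=
    ((contDiff_infty_iff_deriv.mp hf1).2).continuous
  have hδ : 0 < ((n : ℝ) + 1) * (f 0) ^ 2 - n := by
    have h1 : (0 : ℝ) < (n : ℝ) + 1 := by positivity
    rw [div_lt_iff₀ h1] at hcsq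
    nlinarith
  -- the ODE in product form
  have hA : ∀ t, 0 ≤ t → deriv (deriv f) t * f t
      = ((n : ℝ) + 1) * (f t) ^ 2 - n * (deriv f t) ^ 2 - n := by
    intro t ht
    have hft : f t ≠ 0 := (hpos t ht).ne'
    have h := hode t ht
    field_simp at h
    have key : deriv (deriv f) t * f t * f t ^ 3
        = (((n : ℝ) + 1) * (f t) ^ 2 - n * (deriv f t) ^ 2 - n) * f t ^ 3 := by
      linear_combination f t ^ 3 * h
    exact mul_right_cancel₀ (pow_ne_zero 3 hft) key
  -- the conserved quantity
  set E : ℝ → ℝ := fun t => ((deriv f t) ^ 2 + 1 - (f t) ^ 2) * (f t) ^ (2 * n) with hEdef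
  have hEderiv : ∀ t, 0 ≤ t → HasDerivAt E 0 t := by
    intro t ht
    have h1 : HasDerivAt f (deriv f t) t := (hd1 t).hasDerivAt
    have h2 : HasDerivAt (deriv f) (deriv (deriv f) t) t := (hd2 t).hasDerivAt
    have hu : HasDerivAt (fun s => (deriv f s) ^ 2 + 1 - (f s) ^ 2)
        (2 * deriv f t * deriv (deriv f) t - 2 * f t * deriv f t) t := by
      have := ((h2.pow 2).add_const 1).sub (h1.pow 2)
      refine this.congr_deriv ?_
      push_cast
      ring
    have hv : HasDerivAt (fun s => (f s) ^ (2 * n))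
        ((2 * n : ℕ) * (f t) ^ (2 * n - 1) * deriv f t) t := h1.pow (2 * n)
    have hD := hu.mul hv
    have hsplit : (f t) ^ (2 * n) = (f t) ^ (2 * n - 1) * f t := by
      rw [← pow_succ]; congr 1; omega
    have hzero : (2 * deriv f t * deriv (deriv f) t - 2 * f t * deriv f t) * (f t) ^ (2 * n)
        + ((deriv f t) ^ 2 + 1 - (f t) ^ 2) * ((2 * n : ℕ) * (f t) ^ (2 * n - 1) * deriv f t)
        = 0 := by
      rw [hsplit]
      push_cast
      linear_combination (2 * deriv f t * (f t) ^ (2 * n - 1)) * hA t ht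
    rw [← hzero]
    exact hD
  have hB : ∀ t, 0 ≤ t → ((deriv f t) ^ 2 + 1 - (f t) ^ 2) * (f t) ^ (2 * n)
      = (1 - (f 0) ^ 2) * (f 0) ^ (2 * n) := by
    intro t ht
    have hcont : ContinuousOn E (Icc 0 t) := by
      apply Continuous.continuousOn
      exact (((hd2.continuous.pow 2).add continuous_const).sub (hd1.continuous.pow 2)).mul
        (hd1.continuous.pow (2 * n))
    have := constant_of_has_deriv_right_zero hcont
      (fun x hx => (hEderiv x hx.1).hasDerivWithinAt) t (right_mem_Icc.mpr ht)
    simpa [hEdef, hf'0] using this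
  have hE0 : 0 ≤ (1 - (f 0) ^ 2) * (f 0) ^ (2 * n) := by
    apply mul_nonneg (by nlinarith) (by positivity)
  -- the key inequality when f t ≥ f 0
  have hstar : ∀ t, 0 ≤ t → f 0 ≤ f t →
      (((n : ℝ) + 1) * (f 0) ^ 2 - n) * f t ≤ deriv (deriv f) t * (f 0) ^ 2 := by
    intro t ht hcF
    have hF : 0 < f t := hpos t ht
    have hM : (0 : ℝ) < (f t) ^ (2 * n) := by positivity
    have hpow : (f 0) ^ (2 * n) * (f 0) ^ 2 ≤ (f t) ^ (2 * n) * (f t) ^ 2 := by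
      have := pow_le_pow_left₀ hc0.le hcF (2 * n + 2)
      rwa [pow_add, pow_add] at this
    have hC : deriv (deriv f) t * f t * (f t) ^ (2 * n)
        = (f t) ^ 2 * (f t) ^ (2 * n) - n * ((1 - (f 0) ^ 2) * (f 0) ^ (2 * n)) := by
      linear_combination (f t) ^ (2 * n) * hA t ht - (n : ℝ) * hB t ht
    have hC2 : deriv (deriv f) t * f t * (f t) ^ (2 * n) * (f 0) ^ 2
        = ((f t) ^ 2 * (f t) ^ (2 * n) - n * ((1 - (f 0) ^ 2) * (f 0) ^ (2 * n))) * (f 0) ^ 2 := by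
      linear_combination (f 0) ^ 2 * hC
    have hprod : 0 ≤ (n : ℝ) * ((1 - (f 0) ^ 2) *
        ((f t) ^ (2 * n) * (f t) ^ 2 - (f 0) ^ (2 * n) * (f 0) ^ 2)) := by
      apply mul_nonneg (by positivity)
      apply mul_nonneg (by nlinarith) (by linarith)
    have key : (((n : ℝ) + 1) * (f 0) ^ 2 - n) * f t * (f t * (f t) ^ (2 * n))
        ≤ deriv (deriv f) t * (f 0) ^ 2 * (f t * (f t) ^ (2 * n)) := by
      nlinarith [hC2, hprod]
    exact le_of_mul_le_mul_right key (by positivity)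
  have hf''pos : ∀ t, 0 ≤ t → f 0 ≤ f t → 0 < deriv (deriv f) t := by
    intro t ht hcF
    have hs := hstar t ht hcF
    nlinarith [mul_pos hδ (lt_of_lt_of_le hc0 hcF), mul_pos hc0 hc0, sq_nonneg (f 0)]
  -- bootstrap: f t ≥ f 0 for all t ≥ 0
  have hge : ∀ t, 0 ≤ t → f 0 ≤ f t := by
    intro t ht
    by_contra hcon
    push_neg at hcon
    set B : Set ℝ := {s | 0 ≤ s ∧ f s < f 0} with hBdef
    have hBne : B.Nonempty := ⟨t, ht, hcon⟩
    have hBbd : BddBelow B := ⟨0, fun x hx => hx.1⟩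
    set t1 := sInf B with ht1def
    have ht1 : 0 ≤ t1 := le_csInf hBne fun x hx => hx.1
    have hIco : ∀ s ∈ Ico 0 t1, f 0 ≤ f s := by
      intro s hs
      by_contra hsc
      push_neg at hsc
      exact absurd (csInf_le hBbd ⟨hs.1, hsc⟩) (not_le.mpr hs.2)
    have hIcc : ∀ s ∈ Icc 0 t1, f 0 ≤ f s := by
      intro s hs
      rcases lt_or_eq_of_le hs.2 with h | h
      · exact hIco s ⟨hs.1, h⟩
      · rw [h]
        rcases eq_or_lt_of_le ht1 with h0 | h0
        · rw [← h0]
        · refine ge_of_tendsto (x := nhdsWithin t1 (Iio t1))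
            ((hd1.continuous.tendsto t1).mono_left nhdsWithin_le_nhds) ?_
          filter_upwards [Ioo_mem_nhdsLT h0] with x hx
          exact hIco x ⟨hx.1.le, hx.2⟩
    -- f'' > 0 on [0, t1], so f' is monotone there, f' t1 ≥ 0
    have hmono : MonotoneOn (deriv f) (Icc 0 t1) := by
      apply monotoneOn_of_deriv_nonneg (convex_Icc 0 t1) hd2.continuous.continuousOn
        hd2.differentiableOn
      intro x hx
      rw [interior_Icc] at hx
      exact (hf''pos x hx.1.le (hIcc x ⟨hx.1.le, hx.2.le⟩)).le
    have hf't1 : 0 ≤ deriv f t1 := by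
      have := hmono (left_mem_Icc.mpr ht1) (right_mem_Icc.mpr ht1) ht1
      rwa [hf'0] at this
    -- f'' > 0 slightly past t1
    have ht1pos : 0 < deriv (deriv f) t1 := hf''pos t1 ht1 (hIcc t1 (right_mem_Icc.mpr ht1))
    obtain ⟨ε, hε, hball⟩ := Metric.continuousAt_iff.mp (hcont2.continuousAt (x := t1))
      (deriv (deriv f) t1) ht1pos
    have hppos : ∀ s ∈ Icc t1 (t1 + ε / 2), 0 < deriv (deriv f) s := by
      intro s hs
      have hd : dist s t1 < ε := by
        rw [Real.dist_eq, abs_of_nonneg (by linarith [hs.1])]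
        linarith [hs.2]
      have := hball hd
      rw [Real.dist_eq, abs_lt] at this
      linarith [this.1]
    have hsm' : StrictMonoOn (deriv f) (Icc t1 (t1 + ε / 2)) := by
      apply strictMonoOn_of_deriv_pos (convex_Icc _ _) hd2.continuous.continuousOn
      intro x hx
      rw [interior_Icc] at hx
      exact hppos x ⟨hx.1.le, hx.2.le⟩
    have hfpos' : ∀ x ∈ Ioo t1 (t1 + ε / 2), 0 < deriv f x := by
      intro x hx
      have := hsm' (left_mem_Icc.mpr (by linarith)) ⟨hx.1.le, hx.2.le⟩ hx.1
      linarith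
    have hsm : StrictMonoOn f (Icc t1 (t1 + ε / 2)) := by
      apply strictMonoOn_of_deriv_pos (convex_Icc _ _) hd1.continuous.continuousOn
      intro x hx
      rw [interior_Icc] at hx
      exact hfpos' x hx
    -- get an element of B below t1 + ε/2
    obtain ⟨b, hbB, hblt⟩ := exists_lt_of_csInf_lt hBne
      (show sInf B < t1 + ε / 2 by rw [← ht1def]; linarith)
    have hbge : t1 ≤ b := csInf_le hBbd hbB
    have : f 0 ≤ f b := by
      rcases eq_or_lt_of_le hbge with h | h
      · rw [← h]; exact hIcc t1 (right_mem_Icc.mpr ht1)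
      · have := hsm (left_mem_Icc.mpr (by linarith)) ⟨hbge, hblt.le⟩ h
        have h2 := hIcc t1 (right_mem_Icc.mpr ht1)
        linarith
    exact absurd hbB.2 (not_lt.mpr this)
  -- upper bound: f''/f ≤ 1
  have hup : ∀ t, 0 ≤ t → deriv (deriv f) t / f t ≤ 1 := by
    intro t ht
    have hF := hpos t ht
    have hM : (0 : ℝ) < (f t) ^ (2 * n) := by positivity
    have h1 : 0 ≤ (deriv f t) ^ 2 + 1 - (f t) ^ 2 := by
      by_contra h
      push_neg at h
      have := mul_neg_of_neg_of_pos h hM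
      rw [hB t ht] at this
      linarith [hE0]
    have h2 : deriv (deriv f) t * f t ≤ f t * f t := by
      have hn0 : (0 : ℝ) ≤ n := Nat.cast_nonneg n
      nlinarith [hA t ht]
    rw [div_le_one hF]
    exact le_of_mul_le_mul_right h2 hF
  -- lower bound
  have hlow : ∀ t, 0 ≤ t → (n : ℝ) + 1 - n / (f 0) ^ 2 ≤ deriv (deriv f) t / f t := by
    intro t ht
    have hF := hpos t ht
    have hs := hstar t ht (hge t ht)
    have heq : (n : ℝ) + 1 - n / (f 0) ^ 2 = (((n : ℝ) + 1) * (f 0) ^ 2 - n) / (f 0) ^ 2 := by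
      field_simp
    rw [heq, div_le_div_iff₀ (by positivity) hF]
    exact hs
  intro t ht
  have h1 := hup t ht
  have h2 := hlow t ht
  have hF := hpos t ht
  have h3 : -((n : ℝ) + 1) + n / (f 0) ^ 2 < 0 := by
    have : (n : ℝ) / (f 0) ^ 2 < (n : ℝ) + 1 := by
      rw [div_lt_iff₀ (by positivity)]
      nlinarith
    linarith
  have hq : -(deriv (deriv f) t / f t) ≤ 0 := by linarith
  have hn2 : (2 : ℝ) ≤ (n : ℝ) := by exact_mod_cast hn
  have h4 : 0 ≤ 2 * ((n:ℝ) - 1) * (-(-(deriv (deriv f) t / f t))) :=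
    mul_nonneg (by linarith) (by linarith)
  have h5 : 2 * ((n:ℝ) - 1) * (-(deriv (deriv f) t / f t)) ≤ 2 * ((n:ℝ) - 1) * 1 :=
    mul_le_mul_of_nonneg_left (by linarith) (by linarith)
  refine ⟨⟨by linarith, by linarith, h3⟩, by nlinarith [h4], by nlinarith [h5]⟩
end

section
/- Let n ≥ 2 and let f be a solution of f''/f + n (f')²/f² + n/f² = n+1 with f'(0) = 0, f(0) ∈ (√(n/(n+1)), 1]. Then the quantity h(t) := (f'(t)² + 1)/f(t)² satisfies h(t) = −(1/n)(f''(t)/f(t)) + (n+1)/n, is nonincreasing in t, and takes values in [1, 1/f(0)²]. -/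
open Set

set_option maxHeartbeats 1000000 in
theorem stmt_19 (n : ℕ) (hn : 2 ≤ n) (f : ℝ → ℝ)
    (hf : ContDiff ℝ (⊤ : ℕ∞) f)
    (hpos : ∀ t, 0 ≤ t → 0 < f t)
    (hode : ∀ t, 0 ≤ t →
      deriv (deriv f) t / f t + n * (deriv f t) ^ 2 / (f t) ^ 2 + n / (f t) ^ 2 = n + 1)
    (hf'0 : deriv f 0 = 0)
    (hf0lo : Real.sqrt (n / (n + 1)) < f 0) (hf0hi : f 0 ≤ 1) :
    (∀ t, 0 ≤ t →
      ((deriv f t) ^ 2 + 1) / (f t) ^ 2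
        = -(1 / n) * (deriv (deriv f) t / f t) + ((n : ℝ) + 1) / n) ∧
    AntitoneOn (fun t => ((deriv f t) ^ 2 + 1) / (f t) ^ 2) (Set.Ici 0) ∧
    (∀ t, 0 ≤ t → 1 ≤ ((deriv f t) ^ 2 + 1) / (f t) ^ 2 ∧
      ((deriv f t) ^ 2 + 1) / (f t) ^ 2 ≤ 1 / (f 0) ^ 2) := by
  have hn0 : (n : ℝ) ≠ 0 := by positivity
  have h1 : ContDiff ℝ (⊤:ℕ∞) f := hf.of_le (by simp)
  have hdf : Differentiable ℝ f := hf.differentiable (by simp)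
  have hcf : Continuous f := hdf.continuous
  have hcd1 : ContDiff ℝ (⊤:ℕ∞) (deriv f) := by
    have := ContDiff.iterate_deriv 1 h1
    simpa using this
  have hdf' : Differentiable ℝ (deriv f) := hcd1.differentiable (by simp)
  have hcf' : Continuous (deriv f) := hdf'.continuous
  have hcf'' : Continuous (deriv (deriv f)) := hcd1.continuous_deriv (by exact_mod_cast le_top)
  have hfne : ∀ t, 0 ≤ t → f t ≠ 0 := fun t ht => (hpos t ht).ne'
  -- ODE in polynomial form
  have hode2 : ∀ t, 0 ≤ t →
      deriv (deriv f) t * f t = (n + 1) * f t ^ 2 - n * (deriv f t) ^ 2 - n := by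
    intro t ht
    have h := hode t ht
    have h0 := hfne t ht
    field_simp at h
    refine mul_right_cancel₀ (pow_ne_zero 3 h0) ?_
    linear_combination (f t ^ 3) * h
  obtain ⟨m, hm⟩ : ∃ m, 2 * n = m + 1 := ⟨2 * n - 1, by omega⟩
  have hm' : (2:ℝ) * n = (m:ℝ) + 1 := by exact_mod_cast congrArg (Nat.cast (R := ℝ)) hm
  set E : ℝ → ℝ := fun t => (f t) ^ (m + 1) * ((deriv f t) ^ 2 + 1) - (f t) ^ (m + 3) with hEdef
  have hEderiv : ∀ t, 0 ≤ t → HasDerivAt E 0 t := by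
    intro t ht
    have h1' : HasDerivAt f (deriv f t) t := (hdf t).hasDerivAt
    have h2' : HasDerivAt (deriv f) (deriv (deriv f) t) t := (hdf' t).hasDerivAt
    have hA : HasDerivAt (fun s => (f s) ^ (m + 1))
        ((m + 1 : ℕ) * f t ^ (m + 1 - 1) * deriv f t) t := h1'.pow (m + 1)
    have hB : HasDerivAt (fun s => (deriv f s) ^ 2 + 1)
        (2 * deriv f t * deriv (deriv f) t) t := by
      simpa using ((h2'.pow 2).add_const 1)
    have hC : HasDerivAt (fun s => (f s) ^ (m + 3))
        ((m + 3 : ℕ) * f t ^ (m + 3 - 1) * deriv f t) t := h1'.pow (m + 3)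
    have hD := (hA.mul hB).sub hC
    refine hD.congr_deriv ?_
    symm
    have key := hode2 t ht
    rw [show m + 1 - 1 = m from rfl, show m + 3 - 1 = m + 2 from rfl]
    push_cast
    linear_combination (-2 * deriv f t * f t ^ m) * key +
      (f t ^ m * deriv f t * ((deriv f t)^2 + 1 - f t ^ 2)) * hm'
  have hEcont : Continuous E :=
    ((hcf.pow _).mul ((hcf'.pow 2).add continuous_const)).sub (hcf.pow _)
  have hEdiff : DifferentiableOn ℝ E (interior (Ici (0:ℝ))) := by
    rw [interior_Ici]
    exact fun x hx => ((hEderiv x (le_of_lt hx)).differentiableAt).differentiableWithinAt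
  have hEd0 : ∀ x ∈ interior (Ici (0:ℝ)), deriv E x = 0 := by
    rw [interior_Ici]
    exact fun x hx => (hEderiv x (le_of_lt hx)).deriv
  have hEconst : ∀ t, 0 ≤ t → E t = E 0 := by
    intro t ht
    have hmono : MonotoneOn E (Ici 0) :=
      monotoneOn_of_deriv_nonneg (convex_Ici 0) hEcont.continuousOn hEdiff
        (fun x hx => le_of_eq (hEd0 x hx).symm)
    have hanti : AntitoneOn E (Ici 0) :=
      antitoneOn_of_deriv_nonpos (convex_Ici 0) hEcont.continuousOn hEdiff
        (fun x hx => le_of_eq (hEd0 x hx))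
    exact le_antisymm (hanti (self_mem_Ici) ht ht) (hmono (self_mem_Ici) ht ht)
  set c : ℝ := E 0 with hcdef
  have hf0pos : 0 < f 0 := hpos 0 le_rfl
  have hc0 : c = f 0 ^ (m + 1) - f 0 ^ (m + 3) := by
    simp only [hcdef, hEdef, hf'0]
    ring
  have hcnonneg : 0 ≤ c := by
    rw [hc0]
    have h3 : f 0 ^ (m + 3) ≤ f 0 ^ (m + 1) := by
      apply pow_le_pow_of_le_one (le_of_lt hf0pos) hf0hi
      omega
    linarith
  -- the key strict inequality : n * c < f 0 ^ (m + 3)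
  have hsq : (n : ℝ) / (n + 1) < f 0 ^ 2 := by
    have h0 : (0:ℝ) ≤ (n : ℝ) / (n + 1) := by positivity
    have := Real.sq_sqrt h0
    nlinarith [Real.sqrt_nonneg ((n:ℝ) / (n+1)), hf0lo]
  have hkey : (n : ℝ) * c < f 0 ^ (m + 3) := by
    rw [hc0]
    have hp : 0 < f 0 ^ (m + 1) := pow_pos hf0pos _
    have h2 : (n : ℝ) < (n + 1) * f 0 ^ 2 := by
      rw [div_lt_iff₀ (by positivity)] at hsq
      linarith
    have h3 : f 0 ^ (m + 3) = f 0 ^ (m+1) * f 0 ^ 2 := by ring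
    nlinarith [hp]
  -- f'' is positive wherever f t ≥ f 0
  have hf''pos : ∀ t, 0 ≤ t → f 0 ≤ f t → 0 < deriv (deriv f) t := by
    intro t ht hft
    have hE := hEconst t ht
    have key := hode2 t ht
    have hftpos := hpos t ht
    -- f'' * f^(m+2) = f^(m+3) - n * c
    have h4 : deriv (deriv f) t * f t ^ (m + 2) = f t ^ (m + 3) - n * c := by
      have h5 : f t ^ (m+1) * ((deriv f t)^2 + 1) - f t ^ (m+3) = c := hE
      have h6 : f t ^ (m + 2) = f t ^ (m+1) * f t := by ring
      calc deriv (deriv f) t * f t ^ (m + 2)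
          = (deriv (deriv f) t * f t) * f t ^ (m+1) := by ring
        _ = ((n + 1) * f t ^ 2 - n * (deriv f t) ^ 2 - n) * f t ^ (m+1) := by rw [key]
        _ = f t ^ (m + 3) - n * c := by
            rw [← h5]
            ring
    have h7 : f 0 ^ (m + 3) ≤ f t ^ (m + 3) :=
      pow_le_pow_left₀ (le_of_lt hf0pos) hft _
    have h8 : 0 < deriv (deriv f) t * f t ^ (m + 2) := by
      rw [h4]; linarith
    have h9 : 0 < f t ^ (m + 2) := pow_pos hftpos _
    by_contra hcon
    push_neg at hcon
    nlinarith
  -- f' is nonnegative on [0, b] for every b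
  have main : ∀ b, 0 ≤ b → ∀ u, u ∈ Icc 0 b → 0 ≤ deriv f u := by
    intro b hb
    set S : Set ℝ := {t | t ∈ Icc 0 b ∧ ∀ u ∈ Icc 0 t, 0 ≤ deriv f u} with hSdef
    have h0S : (0:ℝ) ∈ S := by
      refine ⟨⟨le_rfl, hb⟩, ?_⟩
      intro u hu
      have hu0 : u = 0 := le_antisymm hu.2 hu.1
      rw [hu0, hf'0]
    have hSne : S.Nonempty := ⟨0, h0S⟩
    have hSbdd : BddAbove S := ⟨b, fun x hx => hx.1.2⟩
    set M := sSup S with hMdef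
    have hM0 : 0 ≤ M := le_csSup hSbdd h0S
    have hMb : M ≤ b := csSup_le hSne (fun x hx => hx.1.2)
    have hlt : ∀ u, 0 ≤ u → u < M → 0 ≤ deriv f u := by
      intro u hu hum
      obtain ⟨t, htS, hut⟩ := exists_lt_of_lt_csSup hSne hum
      exact htS.2 u ⟨hu, le_of_lt hut⟩
    have hfM : 0 ≤ deriv f M := by
      rcases eq_or_lt_of_le hM0 with hM | hM
      · rw [← hM, hf'0]
      · have htend : Filter.Tendsto (deriv f) (nhdsWithin M (Iio M)) (nhds (deriv f M)) :=
          (hcf'.tendsto M).mono_left nhdsWithin_le_nhds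
        refine ge_of_tendsto htend ?_
        filter_upwards [Ioo_mem_nhdsLT_of_mem (⟨hM, le_rfl⟩ : M ∈ Ioc 0 M)] with u hu
        exact hlt u (le_of_lt hu.1) hu.2
    have hMS : M ∈ S := by
      refine ⟨⟨hM0, hMb⟩, ?_⟩
      intro u hu
      rcases eq_or_lt_of_le hu.2 with h | h
      · rw [h]; exact hfM
      · exact hlt u hu.1 h
    have hMeqb : M = b := by
      by_contra hne
      have hMltb : M < b := lt_of_le_of_ne hMb hne
      have hmono : MonotoneOn f (Icc 0 M) := by
        apply monotoneOn_of_deriv_nonneg (convex_Icc 0 M) hcf.continuousOn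
          hdf.differentiableOn
        intro x hx
        rw [interior_Icc] at hx
        exact hMS.2 x ⟨le_of_lt hx.1, le_of_lt hx.2⟩
      have hfM0 : f 0 ≤ f M := hmono ⟨le_rfl, hM0⟩ ⟨hM0, le_rfl⟩ hM0
      have hf''M : 0 < deriv (deriv f) M := hf''pos M hM0 hfM0
      have hU : IsOpen {u : ℝ | 0 < deriv (deriv f) u} := isOpen_lt continuous_const hcf''
      obtain ⟨ε, hε, hball⟩ := Metric.isOpen_iff.mp hU M hf''M
      set δ := min (ε / 2) (b - M) with hδdef
      have hδ1 : δ ≤ ε / 2 := min_le_left _ _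
      have hδ2 : δ ≤ b - M := min_le_right _ _
      have hδpos : 0 < δ := lt_min (by linarith) (by linarith)
      have hstrict : StrictMonoOn (deriv f) (Icc M (M + δ)) := by
        apply strictMonoOn_of_deriv_pos (convex_Icc _ _) hcf'.continuousOn
        intro x hx
        rw [interior_Icc] at hx
        apply hball
        rw [Metric.mem_ball, Real.dist_eq, abs_sub_lt_iff]
        constructor <;> [nlinarith [hx.1, hx.2]; nlinarith [hx.1, hx.2]]
      have hMδ : M + δ ∈ S := by
        refine ⟨⟨by linarith, by linarith⟩, ?_⟩
        intro u hu
        rcases le_or_gt u M with h | h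
        · exact hMS.2 u ⟨hu.1, h⟩
        · have := hstrict ⟨le_rfl, by linarith⟩ ⟨le_of_lt h, hu.2⟩ h
          linarith
      have : M + δ ≤ M := le_csSup hSbdd hMδ
      linarith
    intro u hu
    rw [hMeqb] at hMS
    exact hMS.2 u hu
  have hf'nonneg : ∀ t, 0 ≤ t → 0 ≤ deriv f t := fun t ht => main t ht t ⟨ht, le_rfl⟩
  have hfmono : MonotoneOn f (Ici 0) := by
    apply monotoneOn_of_deriv_nonneg (convex_Ici 0) hcf.continuousOn hdf.differentiableOn
    intro x hx
    rw [interior_Ici] at hx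
    exact hf'nonneg x (le_of_lt hx)
  -- the value of h
  have hval : ∀ t, 0 ≤ t →
      ((deriv f t) ^ 2 + 1) / (f t) ^ 2 = (c + f t ^ (m + 3)) / f t ^ (m + 3) := by
    intro t ht
    have hE := hEconst t ht
    have h0 := hpos t ht
    rw [div_eq_div_iff (by positivity) (by positivity)]
    linear_combination (f t ^ 2) * hE
  have hanti : AntitoneOn (fun t => ((deriv f t) ^ 2 + 1) / (f t) ^ 2) (Set.Ici 0) := by
    intro s hs t ht hst
    simp only
    rw [hval s hs, hval t ht]
    have hfs := hpos s hs
    have hft := hpos t ht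
    have hab : f s ^ (m + 3) ≤ f t ^ (m + 3) :=
      pow_le_pow_left₀ (le_of_lt hfs) (hfmono hs ht hst) _
    rw [div_le_div_iff₀ (by positivity) (by positivity)]
    nlinarith [mul_le_mul_of_nonneg_left hab hcnonneg]
  refine ⟨?_, hanti, ?_⟩
  · intro t ht
    have key := hode t ht
    have h0 := hfne t ht
    field_simp at key ⊢
    refine mul_right_cancel₀ (pow_ne_zero 3 h0) ?_
    linear_combination (f t ^ 3) * key
  · intro t ht
    constructor
    · rw [hval t ht, le_div_iff₀ (by have := hpos t ht; positivity)]
      have := pow_pos (hpos t ht) (m + 3)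
      linarith
    · have h1 := hanti (self_mem_Ici) (mem_Ici.mpr ht) ht
      simp only at h1
      rw [hf'0] at h1
      calc ((deriv f t) ^ 2 + 1) / (f t) ^ 2 ≤ (0 ^ 2 + 1) / (f 0) ^ 2 := h1
        _ = 1 / (f 0) ^ 2 := by norm_num
end
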